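/- arXiv:2209.09478 — 3 statements merged into one kernel-verified Lean document; each statement's English description precedes it below -/
import Mathlib

section
/- Theorem 2 (Motion coordination on surfaces). Assume the communication graph G is undirected and connected and all first and second partial derivatives ∂_{w1}f^i_j, ∂_{w2}f^i_j, ∂²_{w1w1}f^i_j, ∂²_{w1w2}f^i_j, ∂²_{w2w1}f^i_j, ∂²_{w2w2}f^i_j are bounded on ℝ². Given desired parametric speeds ẇ₁*, ẇ₂* ∈ ℝ, choose the extra-vector constants v_{n+1} = (−1)^{n+1} ẇ₂* and v_{n+2} = (−1)^n ẇ₁*. Let ξ : [0,∞) → ℝ^{(n+2)N} be any solution of the coupled autonomous system ξ̇^i(t) = χ^i(ξ^i(t), w₁(t), w₂(t)) for all i, where w₁(t), w₂(t) ∈ ℝ^N collect the (n+1)-th and (n+2)-th components of the ξ^i(t). Then for every initial condition: (1) ‖Φ^i(ξ^i(t))‖ → 0 as t → ∞ for every i; (2) Dᵀ(w₁(t) − w₁*) → 0 and Dᵀ(w₂(t) − w₂*) → 0 as t → ∞, so w^i_1(t) − w^j_1(t) → (w₁*)_i − (w₁*)_j and w^i_2(t) − w^j_2(t) → (w₂*)_i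 − (w₂*)_j for every edge (i,j); and (3) ẇ^i_1(t) → ẇ₁* and ẇ^i_2(t) → ẇ₂* as t → ∞ for every i. -/
open Filter Topology Matrix

/-- first partial derivative of `g : ℝ → ℝ → ℝ` with respect to the first argument -/
noncomputable def pw1 (g : ℝ → ℝ → ℝ) (a b : ℝ) : ℝ := deriv (fun s => g s b) a

/-- first partial derivative of `g : ℝ → ℝ → ℝ` with respect to the second argument -/
noncomputable def pw2 (g : ℝ → ℝ → ℝ) (a b : ℝ) : ℝ := deriv (fun s => g a s) b

/-!
The extra-vector components of `ẋ^i` and `ẇ^i` cancel in the surface errors: writing `U^i_a`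
for the deviation of `ẇ^i_a` from its feed-forward value (equal to `ẇ_a*` for the chosen
`v_{n+1}, v_{n+2}`), one gets `φ̇^i_j = -k^i_j φ^i_j - Σ_a ∂_{w_a} f^i_j U^i_a`, while
by construction `k_{ca} L (w_a - w_a*) = Σ_j k^i_j φ^i_j ∂_{w_a} f^i_j - U^i_a`. Hence the
Lyapunov function `V = Σ k/2 φ² + Σ_a k_{ca}/2 (w_a - w_a*)ᵀ L (w_a - w_a*)` satisfies
`V̇ = -W` with `W = Σ (k φ)² + Σ U²`; the feed-forward contribution to `V̇` vanishes because
`L 𝟙 = 0`. Since `V` is nonincreasing it bounds `φ` and `Dᵀ (w_a - w_a*)`, so together with the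
bounded partial derivatives of `f` every quantity entering `Ẇ` is bounded and `W` is uniformly
continuous on `[0, ∞)`. Barbalat's lemma gives `W → 0`, i.e. `φ → 0` and `ẇ → ẇ*`, and then
`L (w_a - w_a*) → 0`. Finally `ker L ⊆ ker Dᵀ`, and `L v = 0` forces `v_i = v_j` along every
edge, which yields the coordination statements.
-/

open Set Asymptotics

theorem LinearMap.exists_comp_eq_of_ker_le {K V F G : Type*} [Field K] [AddCommGroup V]
    [Module K V] [AddCommGroup F] [Module K F] [AddCommGroup G] [Module K G]
    {A : V →ₗ[K] F} {B : V →ₗ[K] G} (h : ker A ≤ ker B) : ∃ M : F →ₗ[K] G, M ∘ₗ A = B := by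
  obtain ⟨M, hM⟩ := LinearMap.exists_extend
    ((ker A).liftQ B h ∘ₗ (A.quotKerEquivRange.symm : range A →ₗ[K] V ⧸ ker A))
  refine ⟨M, LinearMap.ext fun v => ?_⟩
  have hv : (⟨A v, mem_range_self A v⟩ : range A) =
      A.quotKerEquivRange (Submodule.Quotient.mk v) := rfl
  simpa [hv] using LinearMap.congr_fun hM ⟨A v, mem_range_self A v⟩

theorem LinearMap.tendsto_zero_of_ker_le {𝕜 V F G α : Type*} [NontriviallyNormedField 𝕜]
    [CompleteSpace 𝕜] [AddCommGroup V] [Module 𝕜 V] [NormedAddCommGroup F] [NormedSpace 𝕜 F]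
    [FiniteDimensional 𝕜 F] [NormedAddCommGroup G] [NormedSpace 𝕜 G]
    {A : V →ₗ[𝕜] F} {B : V →ₗ[𝕜] G} (h : ker A ≤ ker B) {l : Filter α} {v : α → V}
    (hv : Tendsto (fun x => A (v x)) l (𝓝 0)) : Tendsto (fun x => B (v x)) l (𝓝 0) := by
  obtain ⟨M, rfl⟩ := exists_comp_eq_of_ker_le h
  simpa [Function.comp_def] using (M.continuous_of_finiteDimensional.tendsto 0).comp hv

theorem Matrix.dotProduct_mulVec_mul_transpose_self {ι κ R : Type*} [Fintype ι] [Fintype κ]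
    [CommSemiring R] (D : Matrix ι κ R) (v : ι → R) :
    v ⬝ᵥ (D * Dᵀ) *ᵥ v = ∑ c, (Dᵀ *ᵥ v) c ^ 2 := by
  rw [← mulVec_mulVec, dotProduct_mulVec, ← mulVec_transpose]
  simp [dotProduct, sq]

theorem Matrix.sum_mulVec_eq_zero {ι R : Type*} [Fintype ι] [CommSemiring R]
    {L : Matrix ι ι R} (hLs : L.IsSymm) (hL1 : L *ᵥ (fun _ => 1) = 0) (v : ι → R) :
    ∑ i, (L *ᵥ v) i = 0 :=
  calc ∑ i, (L *ᵥ v) i = (fun _ => 1) ⬝ᵥ L *ᵥ v := by simp [dotProduct]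
    _ = (L *ᵥ fun _ => 1) ⬝ᵥ v := by rw [dotProduct_mulVec, ← mulVec_transpose, hLs.eq]
    _ = 0 := by rw [hL1, zero_dotProduct]

theorem Matrix.tendsto_transpose_mulVec_zero {ι κ α : Type*} [Fintype ι] [Fintype κ]
    {D : Matrix ι κ ℝ} {l : Filter α} {v : α → ι → ℝ}
    (hv : Tendsto (fun x => (D * Dᵀ) *ᵥ v x) l (𝓝 0)) :
    Tendsto (fun x => Dᵀ *ᵥ v x) l (𝓝 0) :=
  LinearMap.tendsto_zero_of_ker_le (A := (D * Dᵀ).mulVecLin) (B := Dᵀ.mulVecLin)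
    (by rw [← ker_mulVecLin_transpose_mul_self Dᵀ, transpose_transpose]) hv

theorem SimpleGraph.tendsto_sub_zero_of_lapMatrix_mulVec {V α : Type*} [Fintype V]
    [DecidableEq V] {G : SimpleGraph V} [DecidableRel G.Adj] {l : Filter α} {v : α → V → ℝ}
    (hv : Tendsto (fun x => G.lapMatrix ℝ *ᵥ v x) l (𝓝 0)) {i j : V} (hij : G.Adj i j) :
    Tendsto (fun x => v x i - v x j) l (𝓝 0) := by
  have hker : LinearMap.ker (G.lapMatrix ℝ).mulVecLin ≤
      LinearMap.ker (LinearMap.proj (R := ℝ) (φ := fun _ : V => ℝ) i - LinearMap.proj j) := by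
    intro u hu
    simp only [LinearMap.mem_ker, LinearMap.sub_apply, LinearMap.coe_proj, Function.eval,
      sub_eq_zero]
    exact (lapMatrix_mulVec_eq_zero_iff_forall_adj G).1 (LinearMap.mem_ker.1 hu) i j hij
  simpa using LinearMap.tendsto_zero_of_ker_le hker hv

theorem SimpleGraph.tendsto_consensus {N E : ℕ} {G : SimpleGraph (Fin N)} [DecidableRel G.Adj]
    {D : Matrix (Fin N) (Fin E) ℝ} (hD : G.lapMatrix ℝ = D * Dᵀ) {w : ℝ → Fin N → ℝ}
    {wstar : Fin N → ℝ}
    (hw : Tendsto (fun t => G.lapMatrix ℝ *ᵥ fun m => w t m - wstar m) atTop (𝓝 0)) :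
    (∀ c, Tendsto (fun t => (Dᵀ *ᵥ fun m => w t m - wstar m) c) atTop (𝓝 0)) ∧
      ∀ i j, G.Adj i j → Tendsto (fun t => w t i - w t j) atTop (𝓝 (wstar i - wstar j)) := by
  refine ⟨tendsto_pi_nhds.1 (Matrix.tendsto_transpose_mulVec_zero (hD ▸ hw)), fun i j hij => ?_⟩
  have := (tendsto_sub_zero_of_lapMatrix_mulVec hw hij).add_const (wstar i - wstar j)
  rw [zero_add] at this
  exact this.congr fun t => by ring

theorem Convex.antitoneOn_of_hasDerivAt_nonpos {s : Set ℝ} (hs : Convex ℝ s) {f f' : ℝ → ℝ}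
    (hf : ∀ x ∈ s, HasDerivAt f (f' x) x) (hf' : ∀ x ∈ s, f' x ≤ 0) : AntitoneOn f s :=
  antitoneOn_of_hasDerivWithinAt_nonpos hs
    (fun x hx => (hf x hx).continuousAt.continuousWithinAt)
    (fun x hx => (hf x (interior_subset hx)).hasDerivWithinAt)
    (fun x hx => hf' x (interior_subset hx))

/-- Barbalat's lemma, in the form used with a Lyapunov function `V`. -/
theorem tendsto_zero_of_hasDerivAt_neg_of_uniformContinuousOn {V g : ℝ → ℝ}
    (hV : ∀ t ≥ 0, HasDerivAt V (-g t) t) (hg : ∀ t ≥ 0, 0 ≤ g t)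
    (hVb : BddBelow (V '' Ici 0)) (hgu : UniformContinuousOn g (Ici 0)) :
    Tendsto g atTop (𝓝 0) := by
  have hanti : AntitoneOn V (Ici 0) :=
    (convex_Ici 0).antitoneOn_of_hasDerivAt_nonpos hV fun t ht => neg_nonpos.2 (hg t ht)
  obtain ⟨ℓ, hℓ⟩ : ∃ ℓ, Tendsto V atTop (𝓝 ℓ) := by
    have hanti' : Antitone fun t => V (max t 0) := fun s t hst =>
      hanti (le_max_right s 0) (le_max_right t 0) (max_le_max hst le_rfl)
    obtain ⟨B, hB⟩ := hVb
    refine ⟨_, (tendsto_atTop_ciInf hanti' ⟨B, ?_⟩).congr' ?_⟩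
    · rintro _ ⟨t, rfl⟩
      exact hB (mem_image_of_mem V (le_max_right t 0))
    · filter_upwards [eventually_ge_atTop 0] with t ht
      rw [max_eq_left ht]
  rw [Metric.uniformContinuousOn_iff] at hgu
  refine tendsto_order.2 ⟨fun a ha => ?_, fun ε hε => ?_⟩
  · filter_upwards [eventually_ge_atTop 0] with t ht
    exact ha.trans_le (hg t ht)
  obtain ⟨δ, hδ, hgδ⟩ := hgu (ε / 2) (half_pos hε)
  have hdrop : Tendsto (fun t => V t - V (t + δ / 2)) atTop (𝓝 0) := by
    simpa using hℓ.sub (hℓ.comp (tendsto_atTop_add_const_right _ (δ / 2) tendsto_id))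
  filter_upwards [eventually_ge_atTop 0,
    hdrop.eventually (gt_mem_nhds (by positivity : 0 < ε / 2 * (δ / 2)))] with t ht hsmall
  by_contra! hgt
  obtain ⟨c, hc, hslope⟩ := exists_hasDerivAt_eq_slope V (fun s => -g s)
    (by linarith : t < t + δ / 2)
    (fun s hs => (hV s (ht.trans hs.1)).continuousAt.continuousWithinAt)
    (fun s hs => hV s (ht.trans hs.1.le))
  have hgc : ε / 2 < g c := by
    have := hgδ c (ht.trans hc.1.le) t ht
      (by rw [Real.dist_eq, abs_lt]; constructor <;> linarith [hc.1, hc.2])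
    rw [Real.dist_eq, abs_lt] at this
    linarith
  rw [eq_div_iff (sub_pos.2 (by linarith)).ne'] at hslope
  nlinarith

theorem Filter.boundedAtFilter_principal_iff {α β : Type*} [Norm β] {s : Set α} {f : α → β} :
    BoundedAtFilter (𝓟 s) f ↔ ∃ C, ∀ x ∈ s, ‖f x‖ ≤ C := by
  simp [BoundedAtFilter, isBigO_iff, eventually_principal]

theorem Filter.BoundedAtFilter.sum {α β ι : Type*} [SeminormedAddCommGroup β] {l : Filter α}
    (u : Finset ι) {f : ι → α → β} (h : ∀ i ∈ u, BoundedAtFilter l (f i)) :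
    BoundedAtFilter l fun x => ∑ i ∈ u, f i x :=
  IsBigO.fun_sum h

theorem Filter.boundedAtFilter_of_sq_le {α : Type*} {s : Set α} {f : α → ℝ} {C : ℝ}
    (h : ∀ x ∈ s, f x ^ 2 ≤ C) : BoundedAtFilter (𝓟 s) f :=
  boundedAtFilter_principal_iff.2 ⟨1 + C, fun x hx => by
    rw [Real.norm_eq_abs]
    nlinarith [h x hx, sq_abs (f x), sq_nonneg (|f x| - 1)]⟩

theorem tendsto_zero_of_sq_le {α : Type*} {l : Filter α} {f g : α → ℝ}
    (h : ∀ᶠ x in l, f x ^ 2 ≤ g x) (hg : Tendsto g l (𝓝 0)) : Tendsto f l (𝓝 0) := by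
  refine squeeze_zero_norm' ?_ (by simpa using hg.sqrt)
  filter_upwards [h] with x hx
  rw [Real.norm_eq_abs, ← Real.sqrt_sq_eq_abs]
  exact Real.sqrt_le_sqrt hx

def BoundedWithDerivOn (s : Set ℝ) (g : ℝ → ℝ) : Prop :=
  BoundedAtFilter (𝓟 s) g ∧
    ∃ g' : ℝ → ℝ, (∀ t ∈ s, HasDerivAt g (g' t) t) ∧ BoundedAtFilter (𝓟 s) g'

namespace BoundedWithDerivOn

variable {s : Set ℝ} {f g : ℝ → ℝ}

theorem const (c : ℝ) : BoundedWithDerivOn s fun _ => c :=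
  ⟨const_boundedAtFilter _ c, 0, fun t _ => hasDerivAt_const t c, const_boundedAtFilter _ 0⟩

theorem add (hf : BoundedWithDerivOn s f) (hg : BoundedWithDerivOn s g) :
    BoundedWithDerivOn s fun t => f t + g t := by
  obtain ⟨hfb, f', hf', hf'b⟩ := hf
  obtain ⟨hgb, g', hg', hg'b⟩ := hg
  exact ⟨hfb.add hgb, f' + g', fun t ht => (hf' t ht).add (hg' t ht), hf'b.add hg'b⟩

theorem mul (hf : BoundedWithDerivOn s f) (hg : BoundedWithDerivOn s g) :
    BoundedWithDerivOn s fun t => f t * g t := by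
  obtain ⟨hfb, f', hf', hf'b⟩ := hf
  obtain ⟨hgb, g', hg', hg'b⟩ := hg
  exact ⟨hfb.mul hgb, f' * g + f * g', fun t ht => (hf' t ht).mul (hg' t ht),
    (hf'b.mul hgb).add (hfb.mul hg'b)⟩

theorem neg (hf : BoundedWithDerivOn s f) : BoundedWithDerivOn s fun t => -f t := by
  simpa using (const (-1)).mul hf

theorem sq (hf : BoundedWithDerivOn s f) : BoundedWithDerivOn s fun t => f t ^ 2 := by
  simpa [pow_two] using hf.mul hf

theorem sum {ι : Type*} (u : Finset ι) {g : ι → ℝ → ℝ}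
    (h : ∀ i ∈ u, BoundedWithDerivOn s (g i)) :
    BoundedWithDerivOn s fun t => ∑ i ∈ u, g i t := by
  classical
  induction u using Finset.induction_on with
  | empty => simpa using const (s := s) 0
  | insert a u ha ih =>
    simp only [Finset.sum_insert ha]
    exact (h a (Finset.mem_insert_self a u)).add
      (ih fun i hi => h i (Finset.mem_insert_of_mem hi))

theorem uniformContinuousOn (hs : Convex ℝ s) (hg : BoundedWithDerivOn s g) :
    UniformContinuousOn g s := by
  obtain ⟨-, g', hg', hg'b⟩ := hg
  obtain ⟨C, hC⟩ := boundedAtFilter_principal_iff.1 hg'b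
  refine (hs.lipschitzOnWith_of_nnnorm_hasDerivWithin_le (C := C.toNNReal)
    (fun t ht => (hg' t ht).hasDerivWithinAt) fun t ht => ?_).uniformContinuousOn
  rw [← NNReal.coe_le_coe, coe_nnnorm, Real.coe_toNNReal']
  exact (hC t ht).trans (le_max_left _ _)

end BoundedWithDerivOn

theorem HasDerivAt.dotProduct_mulVec_self {𝕜 ι : Type*} [NontriviallyNormedField 𝕜] [Fintype ι]
    {A : Matrix ι ι 𝕜} (hA : A.IsSymm) {u : 𝕜 → ι → 𝕜} {u' : ι → 𝕜} {t : 𝕜}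
    (hu : HasDerivAt u u' t) :
    HasDerivAt (fun s => u s ⬝ᵥ A *ᵥ u s) (2 * (u' ⬝ᵥ A *ᵥ u t)) t := by
  have hu' := hasDerivAt_pi.1 hu
  have h : HasDerivAt (fun s => u s ⬝ᵥ A *ᵥ u s) (u' ⬝ᵥ A *ᵥ u t + u t ⬝ᵥ A *ᵥ u') t := by
    have := HasDerivAt.fun_sum (u := Finset.univ) fun i _ =>
      (hu' i).mul (HasDerivAt.fun_sum (u := Finset.univ) fun j _ => (hu' j).const_mul (A i j))
    rwa [Finset.sum_add_distrib] at this
  have hsymm : u t ⬝ᵥ A *ᵥ u' = u' ⬝ᵥ A *ᵥ u t := by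
    rw [dotProduct_mulVec, ← mulVec_transpose, hA.eq, dotProduct_comm]
  rwa [hsymm, ← two_mul] at h

theorem pw1_eq_fderiv {g : ℝ → ℝ → ℝ} {p q : ℝ}
    (hg : DifferentiableAt ℝ (fun x : ℝ × ℝ => g x.1 x.2) (p, q)) :
    pw1 g p q = fderiv ℝ (fun x : ℝ × ℝ => g x.1 x.2) (p, q) (1, 0) := by
  have h : HasDerivAt (fun s => g s q)
      (fderiv ℝ (fun x : ℝ × ℝ => g x.1 x.2) (p, q) (1, 0)) p := by
    exact hg.hasFDerivAt.comp_hasDerivAt p ((hasDerivAt_id p).prodMk (hasDerivAt_const p q))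
  exact h.deriv

theorem pw2_eq_fderiv {g : ℝ → ℝ → ℝ} {p q : ℝ}
    (hg : DifferentiableAt ℝ (fun x : ℝ × ℝ => g x.1 x.2) (p, q)) :
    pw2 g p q = fderiv ℝ (fun x : ℝ × ℝ => g x.1 x.2) (p, q) (0, 1) := by
  have h : HasDerivAt (fun s => g p s)
      (fderiv ℝ (fun x : ℝ × ℝ => g x.1 x.2) (p, q) (0, 1)) q := by
    exact hg.hasFDerivAt.comp_hasDerivAt q ((hasDerivAt_const q p).prodMk (hasDerivAt_id q))
  exact h.deriv

theorem hasDerivAt_comp₂ {g : ℝ → ℝ → ℝ} {a b : ℝ → ℝ} {a' b' t : ℝ}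
    (hg : DifferentiableAt ℝ (fun p : ℝ × ℝ => g p.1 p.2) (a t, b t))
    (ha : HasDerivAt a a' t) (hb : HasDerivAt b b' t) :
    HasDerivAt (fun s => g (a s) (b s))
      (pw1 g (a t) (b t) * a' + pw2 g (a t) (b t) * b') t := by
  have h : HasDerivAt (fun s => g (a s) (b s))
      (fderiv ℝ (fun p : ℝ × ℝ => g p.1 p.2) (a t, b t) (a', b')) t := by
    exact hg.hasFDerivAt.comp_hasDerivAt t (ha.prodMk hb)
  refine h.congr_deriv ?_
  have hab : ((a', b') : ℝ × ℝ) = a' • ((1 : ℝ), (0 : ℝ)) + b' • ((0 : ℝ), (1 : ℝ)) := by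
    simp
  rw [pw1_eq_fderiv hg, pw2_eq_fderiv hg, hab, map_add, map_smul, map_smul, smul_eq_mul,
    smul_eq_mul, mul_comm, mul_comm b']

theorem hasDerivAt_surfaceError {n : ℕ} {g : ℝ → ℝ → ℝ} {x a b : ℝ → ℝ} {v1 v2 u1 u2 κ t : ℝ}
    (hg : DifferentiableAt ℝ (fun p : ℝ × ℝ => g p.1 p.2) (a t, b t))
    (hx : HasDerivAt x ((-1) ^ n * (v2 * pw1 g (a t) (b t) - v1 * pw2 g (a t) (b t))
      - κ * (x t - g (a t) (b t))) t)
    (ha : HasDerivAt a ((-1) ^ n * v2 + u1) t) (hb : HasDerivAt b ((-1) ^ (n + 1) * v1 + u2) t) :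
    HasDerivAt (fun s => x s - g (a s) (b s))
      (-(κ * (x t - g (a t) (b t))) - (pw1 g (a t) (b t) * u1 + pw2 g (a t) (b t) * u2)) t :=
  (hx.sub (hasDerivAt_comp₂ hg ha hb)).congr_deriv (by ring)

noncomputable def partialW : Fin 2 → (ℝ → ℝ → ℝ) → ℝ → ℝ → ℝ := ![pw1, pw2]

theorem differentiable_partialW {g : ℝ → ℝ → ℝ} (hg : ContDiff ℝ 2 fun p : ℝ × ℝ => g p.1 p.2)
    (a : Fin 2) : Differentiable ℝ fun p : ℝ × ℝ => partialW a g p.1 p.2 := by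
  have hd := hg.differentiable (by norm_num)
  have h : (fun p : ℝ × ℝ => partialW a g p.1 p.2) =
      fun p => fderiv ℝ (fun p : ℝ × ℝ => g p.1 p.2) p (![(1, 0), (0, 1)] a) := by
    funext p
    fin_cases a
    exacts [pw1_eq_fderiv (hd p), pw2_eq_fderiv (hd p)]
  rw [h]
  exact ((hg.fderiv_right (m := 1) le_rfl).clm_apply contDiff_const).differentiable (by norm_num)

theorem boundedAtFilter_partialW {α : Type*} {l : Filter α} {g : ℝ → ℝ → ℝ} {C : ℝ}
    (h : ∀ p q, |pw1 g p q| ≤ C ∧ |pw2 g p q| ≤ C ∧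
      |pw1 (pw1 g) p q| ≤ C ∧ |pw2 (pw1 g) p q| ≤ C ∧
      |pw1 (pw2 g) p q| ≤ C ∧ |pw2 (pw2 g) p q| ≤ C) (u v : α → ℝ) :
    (∀ a, BoundedAtFilter l fun x => partialW a g (u x) (v x)) ∧
      ∀ a b, BoundedAtFilter l fun x => partialW b (partialW a g) (u x) (v x) := by
  have hb : ∀ {F : α → ℝ}, (∀ x, |F x| ≤ C) → BoundedAtFilter l F := fun hF =>
    IsBigO.of_bound C (Eventually.of_forall fun x => by simpa using hF x)
  refine ⟨fun a => hb fun x => ?_, fun a b => hb fun x => ?_⟩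
  · fin_cases a <;> simp [partialW, h (u x) (v x)]
  · fin_cases a <;> fin_cases b <;> simp [partialW, h (u x) (v x)]

section ClosedLoop

/- In the theorem `m = 2`, `φ t i j` is the surface error `φ^i_j`, `P t a i j` is `∂_{w_a} f^i_j`
at `(w^i_1(t), w^i_2(t))`, `e t a = w_a(t) - w_a*`, and `speedError … t a i = ẇ^i_a(t) - ẇ_a*`. -/
variable {N n m : ℕ} (k : Fin N → Fin n → ℝ) (kc : Fin m → ℝ) (L : Matrix (Fin N) (Fin N) ℝ)
  (φ : ℝ → Fin N → Fin n → ℝ) (P : ℝ → Fin m → Fin N → Fin n → ℝ) (e : ℝ → Fin m → Fin N → ℝ)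

noncomputable def speedError (t : ℝ) (a : Fin m) (i : Fin N) : ℝ :=
  ∑ l, k i l * φ t i l * P t a i l + kc a * -(L *ᵥ e t a) i

noncomputable def lyapunovFn (t : ℝ) : ℝ :=
  ∑ i, ∑ j, k i j / 2 * φ t i j ^ 2 + ∑ a, kc a / 2 * (e t a ⬝ᵥ L *ᵥ e t a)

noncomputable def dissipation (t : ℝ) : ℝ :=
  ∑ i, ∑ j, (k i j * φ t i j) ^ 2 + ∑ a, ∑ i, speedError k kc L φ P e t a i ^ 2

local notation "U" => speedError k kc L φ P e

variable {k kc L φ P e}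

theorem hasDerivAt_lyapunovFn (hLs : L.IsSymm) (hL1 : L *ᵥ (fun _ => 1) = 0)
    {wd : Fin m → ℝ} {t : ℝ}
    (hφ : ∀ i j,
      HasDerivAt (fun s => φ s i j) (-(k i j * φ t i j) - ∑ a, P t a i j * U t a i) t)
    (he : ∀ a i, HasDerivAt (fun s => e s a i) (wd a + U t a i) t) :
    HasDerivAt (lyapunovFn k kc L φ e) (-dissipation k kc L φ P e t) t := by
  have hsurf := HasDerivAt.fun_sum (u := Finset.univ) fun i _ =>
    HasDerivAt.fun_sum (u := Finset.univ) fun j _ => ((hφ i j).pow 2).const_mul (k i j / 2)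
  have hcons := HasDerivAt.fun_sum (u := Finset.univ) fun a _ =>
    ((hasDerivAt_pi.2 (he a)).dotProduct_mulVec_self hLs).const_mul (kc a / 2)
  refine (hsurf.add hcons).congr_deriv ?_
  set S : Fin m → Fin N → ℝ := fun a i => ∑ l, k i l * φ t i l * P t a i l with hS
  have hsurf_i : ∀ i, ∑ j, k i j / 2 * ((2 : ℕ) * φ t i j ^ (2 - 1) *
      (-(k i j * φ t i j) - ∑ a, P t a i j * U t a i)) =
      -∑ j, (k i j * φ t i j) ^ 2 - ∑ a, U t a i * S a i := fun i => by
    have hj : ∀ j, k i j / 2 * ((2 : ℕ) * φ t i j ^ (2 - 1) *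
        (-(k i j * φ t i j) - ∑ a, P t a i j * U t a i)) =
        -(k i j * φ t i j) ^ 2 - ∑ a, U t a i * (k i j * φ t i j * P t a i j) := fun j => by
      rw [show ∑ a, U t a i * (k i j * φ t i j * P t a i j) =
          k i j * φ t i j * ∑ a, P t a i j * U t a i by
        rw [Finset.mul_sum]; exact Finset.sum_congr rfl fun a _ => by ring]
      push_cast
      ring
    rw [Finset.sum_congr rfl fun j _ => hj j, Finset.sum_sub_distrib, Finset.sum_neg_distrib,
      Finset.sum_comm]
    simp only [hS, Finset.mul_sum]
  have hcons_a : ∀ a, kc a / 2 * (2 * ((fun i => wd a + U t a i) ⬝ᵥ L *ᵥ e t a)) =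
      ∑ i, U t a i * (S a i - U t a i) := fun a =>
    calc _ = kc a * wd a * ∑ i, (L *ᵥ e t a) i + ∑ i, U t a i * (kc a * (L *ᵥ e t a) i) := by
          simp only [dotProduct, Finset.mul_sum, ← Finset.sum_add_distrib]
          exact Finset.sum_congr rfl fun i _ => by ring
      _ = _ := by
          rw [sum_mulVec_eq_zero hLs hL1, mul_zero, zero_add]
          exact Finset.sum_congr rfl fun i _ => by simp only [hS, speedError]; ring
  rw [Finset.sum_congr rfl fun i _ => hsurf_i i, Finset.sum_congr rfl fun a _ => hcons_a a]
  simp only [dissipation, mul_sub, Finset.sum_sub_distrib, Finset.sum_neg_distrib]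
  rw [Finset.sum_comm (f := fun i a => U t a i * S a i)]
  ring_nf

theorem lyapunovFn_eq {E : ℕ} {D : Matrix (Fin N) (Fin E) ℝ} (hD : L = D * Dᵀ) (t : ℝ) :
    lyapunovFn k kc L φ e t =
      ∑ i, ∑ j, k i j / 2 * φ t i j ^ 2 + ∑ a, kc a / 2 * ∑ c, (Dᵀ *ᵥ e t a) c ^ 2 := by
  simp only [lyapunovFn, hD, dotProduct_mulVec_mul_transpose_self]

theorem lyapunovFn_nonneg {E : ℕ} {D : Matrix (Fin N) (Fin E) ℝ} (hk : ∀ i j, 0 ≤ k i j)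
    (hkc : ∀ a, 0 ≤ kc a) (hD : L = D * Dᵀ) (t : ℝ) : 0 ≤ lyapunovFn k kc L φ e t := by
  rw [lyapunovFn_eq hD]
  exact add_nonneg
    (Finset.sum_nonneg fun i _ => Finset.sum_nonneg fun j _ => by have := hk i j; positivity)
    (Finset.sum_nonneg fun a _ => by have := hkc a; positivity)

theorem surface_le_lyapunovFn {E : ℕ} {D : Matrix (Fin N) (Fin E) ℝ} (hk : ∀ i j, 0 ≤ k i j)
    (hkc : ∀ a, 0 ≤ kc a) (hD : L = D * Dᵀ) (t : ℝ) (i : Fin N) (j : Fin n) :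
    k i j / 2 * φ t i j ^ 2 ≤ lyapunovFn k kc L φ e t := by
  have hk' : ∀ i j, 0 ≤ k i j / 2 * φ t i j ^ 2 := fun i j => by have := hk i j; positivity
  rw [lyapunovFn_eq hD]
  calc k i j / 2 * φ t i j ^ 2 ≤ ∑ i, ∑ j, k i j / 2 * φ t i j ^ 2 :=
        (Finset.single_le_sum (fun j _ => hk' i j) (Finset.mem_univ j)).trans
          (Finset.single_le_sum (fun i _ => Finset.sum_nonneg fun j _ => hk' i j)
            (Finset.mem_univ i))
    _ ≤ _ := le_add_of_nonneg_right (Finset.sum_nonneg fun a _ => by have := hkc a; positivity)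

theorem consensus_le_lyapunovFn {E : ℕ} {D : Matrix (Fin N) (Fin E) ℝ} (hk : ∀ i j, 0 ≤ k i j)
    (hkc : ∀ a, 0 ≤ kc a) (hD : L = D * Dᵀ) (t : ℝ) (a : Fin m) (c : Fin E) :
    kc a / 2 * (Dᵀ *ᵥ e t a) c ^ 2 ≤ lyapunovFn k kc L φ e t := by
  have hkc' : ∀ a, 0 ≤ kc a / 2 * ∑ c, (Dᵀ *ᵥ e t a) c ^ 2 := fun a => by
    have := hkc a; positivity
  rw [lyapunovFn_eq hD]
  calc kc a / 2 * (Dᵀ *ᵥ e t a) c ^ 2 ≤ kc a / 2 * ∑ c, (Dᵀ *ᵥ e t a) c ^ 2 :=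
        mul_le_mul_of_nonneg_left
          (Finset.single_le_sum (fun c _ => sq_nonneg _) (Finset.mem_univ c))
          (by have := hkc a; positivity)
    _ ≤ ∑ a, kc a / 2 * ∑ c, (Dᵀ *ᵥ e t a) c ^ 2 :=
        Finset.single_le_sum (fun a _ => hkc' a) (Finset.mem_univ a)
    _ ≤ _ := le_add_of_nonneg_left (Finset.sum_nonneg fun i _ => Finset.sum_nonneg fun j _ => by
          have := hk i j; positivity)

theorem dissipation_nonneg (t : ℝ) : 0 ≤ dissipation k kc L φ P e t := by
  unfold dissipation; positivity

theorem sq_speedError_le_dissipation (t : ℝ) (a : Fin m) (i : Fin N) :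
    U t a i ^ 2 ≤ dissipation k kc L φ P e t := by
  unfold dissipation
  calc U t a i ^ 2 ≤ ∑ a, ∑ i, U t a i ^ 2 :=
        (Finset.single_le_sum (fun i _ => sq_nonneg (U t a i)) (Finset.mem_univ i)).trans
          (Finset.single_le_sum (fun a _ => Finset.sum_nonneg fun i _ => sq_nonneg (U t a i))
            (Finset.mem_univ a))
    _ ≤ _ := le_add_of_nonneg_left (by positivity)

theorem sq_surface_le_dissipation (t : ℝ) (i : Fin N) (j : Fin n) :
    (k i j * φ t i j) ^ 2 ≤ dissipation k kc L φ P e t := by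
  unfold dissipation
  calc (k i j * φ t i j) ^ 2 ≤ ∑ i, ∑ j, (k i j * φ t i j) ^ 2 :=
        (Finset.single_le_sum (fun j _ => sq_nonneg (k i j * φ t i j)) (Finset.mem_univ j)).trans
          (Finset.single_le_sum (f := fun i => ∑ j, (k i j * φ t i j) ^ 2)
            (fun i _ => Finset.sum_nonneg fun j _ => sq_nonneg _) (Finset.mem_univ i))
    _ ≤ _ := le_add_of_nonneg_right (by positivity)

theorem boundedAtFilter_surface_of_lyapunovFn_le {E : ℕ} {D : Matrix (Fin N) (Fin E) ℝ}
    (hk : ∀ i j, 0 < k i j) (hkc : ∀ a, 0 ≤ kc a) (hD : L = D * Dᵀ) {B : ℝ}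
    (hV : ∀ t ≥ 0, lyapunovFn k kc L φ e t ≤ B) (i : Fin N) (j : Fin n) :
    BoundedAtFilter (𝓟 (Ici 0)) fun t => φ t i j :=
  boundedAtFilter_of_sq_le (C := 2 * B / k i j) fun t ht => by
    rw [le_div_iff₀ (hk i j)]
    nlinarith [surface_le_lyapunovFn (φ := φ) (e := e) (fun i j => (hk i j).le) hkc hD t i j,
      hV t ht]

theorem boundedAtFilter_consensus_of_lyapunovFn_le {E : ℕ} {D : Matrix (Fin N) (Fin E) ℝ}
    (hk : ∀ i j, 0 ≤ k i j) (hkc : ∀ a, 0 < kc a) (hD : L = D * Dᵀ) {B : ℝ}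
    (hV : ∀ t ≥ 0, lyapunovFn k kc L φ e t ≤ B) (a : Fin m) (i : Fin N) :
    BoundedAtFilter (𝓟 (Ici 0)) fun t => (L *ᵥ e t a) i := by
  have hc : ∀ c, BoundedAtFilter (𝓟 (Ici 0)) fun t => (Dᵀ *ᵥ e t a) c := fun c =>
    boundedAtFilter_of_sq_le (C := 2 * B / kc a) fun t ht => by
      rw [le_div_iff₀ (hkc a)]
      nlinarith [consensus_le_lyapunovFn (φ := φ) (e := e) hk (fun a => (hkc a).le) hD t a c,
        hV t ht]
  have hLe : (fun t => (L *ᵥ e t a) i) = fun t => ∑ c, D i c * (Dᵀ *ᵥ e t a) c := by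
    funext t
    rw [hD, ← mulVec_mulVec]
    rfl
  rw [hLe]
  exact BoundedAtFilter.sum _ fun c _ => (const_boundedAtFilter _ (D i c)).mul (hc c)

theorem boundedWithDerivOn_dissipation {wd : Fin m → ℝ}
    {H : ℝ → Fin m → Fin m → Fin N → Fin n → ℝ}
    (hφ : ∀ t ≥ 0, ∀ i j,
      HasDerivAt (fun s => φ s i j) (-(k i j * φ t i j) - ∑ a, P t a i j * U t a i) t)
    (he : ∀ t ≥ 0, ∀ a i, HasDerivAt (fun s => e s a i) (wd a + U t a i) t)
    (hP : ∀ t ≥ 0, ∀ a i j,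
      HasDerivAt (fun s => P s a i j) (∑ b, H t a b i j * (wd b + U t b i)) t)
    (hφb : ∀ i j, BoundedAtFilter (𝓟 (Ici 0)) fun t => φ t i j)
    (hPb : ∀ a i j, BoundedAtFilter (𝓟 (Ici 0)) fun t => P t a i j)
    (hHb : ∀ a b i j, BoundedAtFilter (𝓟 (Ici 0)) fun t => H t a b i j)
    (hLeb : ∀ a i, BoundedAtFilter (𝓟 (Ici 0)) fun t => (L *ᵥ e t a) i) :
    BoundedWithDerivOn (Ici 0) (dissipation k kc L φ P e) := by
  have hUb : ∀ a i, BoundedAtFilter (𝓟 (Ici 0)) fun t => U t a i := fun a i =>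
    (BoundedAtFilter.sum _ fun l _ =>
      ((const_boundedAtFilter _ (k i l)).mul (hφb i l)).mul (hPb a i l)).add
    ((const_boundedAtFilter _ (kc a)).mul (hLeb a i).neg)
  have hφw : ∀ i j, BoundedWithDerivOn (Ici 0) fun t => φ t i j := fun i j =>
    ⟨hφb i j, _, fun t ht => hφ t ht i j,
      IsBigO.sub ((const_boundedAtFilter _ (k i j)).mul (hφb i j)).neg
        (BoundedAtFilter.sum _ fun a _ => (hPb a i j).mul (hUb a i))⟩
  have hPw : ∀ a i j, BoundedWithDerivOn (Ici 0) fun t => P t a i j := fun a i j =>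
    ⟨hPb a i j, _, fun t ht => hP t ht a i j, BoundedAtFilter.sum _ fun b _ =>
      (hHb a b i j).mul ((const_boundedAtFilter _ (wd b)).add (hUb b i))⟩
  have hLew : ∀ a i, BoundedWithDerivOn (Ici 0) fun t => (L *ᵥ e t a) i := fun a i =>
    ⟨hLeb a i, fun t => ∑ j, L i j * (wd a + U t a j),
      fun t ht => HasDerivAt.fun_sum (u := Finset.univ) fun j _ =>
        (he t ht a j).const_mul (L i j),
      BoundedAtFilter.sum _ fun j _ => (const_boundedAtFilter _ (L i j)).mul
        ((const_boundedAtFilter _ (wd a)).add (hUb a j))⟩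
  have hUw : ∀ a i, BoundedWithDerivOn (Ici 0) fun t => U t a i := fun a i =>
    (BoundedWithDerivOn.sum _ fun l _ =>
      ((BoundedWithDerivOn.const (k i l)).mul (hφw i l)).mul (hPw a i l)).add
    ((BoundedWithDerivOn.const (kc a)).mul (hLew a i).neg)
  exact (BoundedWithDerivOn.sum _ fun i _ => BoundedWithDerivOn.sum _ fun j _ =>
      ((BoundedWithDerivOn.const (k i j)).mul (hφw i j)).sq).add
    (BoundedWithDerivOn.sum _ fun a _ => BoundedWithDerivOn.sum _ fun i _ => (hUw a i).sq)

theorem tendsto_surface_speedError_zero {E : ℕ} {D : Matrix (Fin N) (Fin E) ℝ}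
    {wd : Fin m → ℝ} {H : ℝ → Fin m → Fin m → Fin N → Fin n → ℝ}
    (hk : ∀ i j, 0 < k i j) (hkc : ∀ a, 0 < kc a) (hD : L = D * Dᵀ)
    (hL1 : L *ᵥ (fun _ => 1) = 0)
    (hφ : ∀ t ≥ 0, ∀ i j,
      HasDerivAt (fun s => φ s i j) (-(k i j * φ t i j) - ∑ a, P t a i j * U t a i) t)
    (he : ∀ t ≥ 0, ∀ a i, HasDerivAt (fun s => e s a i) (wd a + U t a i) t)
    (hP : ∀ t ≥ 0, ∀ a i j,
      HasDerivAt (fun s => P s a i j) (∑ b, H t a b i j * (wd b + U t b i)) t)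
    (hPb : ∀ a i j, BoundedAtFilter (𝓟 (Ici 0)) fun t => P t a i j)
    (hHb : ∀ a b i j, BoundedAtFilter (𝓟 (Ici 0)) fun t => H t a b i j) :
    (∀ i j, Tendsto (fun t => φ t i j) atTop (𝓝 0)) ∧
      ∀ a i, Tendsto (fun t => U t a i) atTop (𝓝 0) := by
  have hLs : L.IsSymm := by rw [hD, IsSymm, transpose_mul, transpose_transpose]
  have hV : ∀ t ≥ 0, HasDerivAt (lyapunovFn k kc L φ e) (-dissipation k kc L φ P e t) t :=
    fun t ht => hasDerivAt_lyapunovFn hLs hL1 (hφ t ht) (he t ht)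
  have hVle : ∀ t ≥ 0, lyapunovFn k kc L φ e t ≤ lyapunovFn k kc L φ e 0 := fun t ht =>
    (convex_Ici 0).antitoneOn_of_hasDerivAt_nonpos hV
      (fun t _ => neg_nonpos.2 (dissipation_nonneg t)) self_mem_Ici ht ht
  have hW : Tendsto (dissipation k kc L φ P e) atTop (𝓝 0) :=
    tendsto_zero_of_hasDerivAt_neg_of_uniformContinuousOn hV (fun t _ => dissipation_nonneg t)
      ⟨0, forall_mem_image.2 fun t _ =>
        lyapunovFn_nonneg (fun i j => (hk i j).le) (fun a => (hkc a).le) hD t⟩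
      ((boundedWithDerivOn_dissipation hφ he hP
        (boundedAtFilter_surface_of_lyapunovFn_le hk (fun a => (hkc a).le) hD hVle) hPb hHb
        (boundedAtFilter_consensus_of_lyapunovFn_le (fun i j => (hk i j).le) hkc hD hVle)
        ).uniformContinuousOn (convex_Ici 0))
  refine ⟨fun i j => ?_, fun a i =>
    tendsto_zero_of_sq_le (Eventually.of_forall fun t => sq_speedError_le_dissipation t a i) hW⟩
  have := (tendsto_zero_of_sq_le (Eventually.of_forall fun t =>
    sq_surface_le_dissipation (kc := kc) (L := L) (P := P) (e := e) t i j) hW).const_mul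
      (k i j)⁻¹
  simpa [← mul_assoc, inv_mul_cancel₀ (hk i j).ne'] using this

theorem tendsto_mulVec_zero_of_tendsto_speedError {a : Fin m} (hkc : kc a ≠ 0)
    (hφ : ∀ i j, Tendsto (fun t => φ t i j) atTop (𝓝 0))
    (hU : ∀ i, Tendsto (fun t => U t a i) atTop (𝓝 0))
    (hPb : ∀ i j, BoundedAtFilter (𝓟 (Ici 0)) fun t => P t a i j) :
    Tendsto (fun t => L *ᵥ e t a) atTop (𝓝 0) := by
  refine tendsto_pi_nhds.2 fun i => ?_
  have hS : Tendsto (fun t => ∑ l, k i l * φ t i l * P t a i l) atTop (𝓝 0) := by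
    simpa using tendsto_finsetSum Finset.univ fun l _ =>
      ZeroAtFilter.mul_boundedAtFilter (by simpa [ZeroAtFilter] using (hφ i l).const_mul (k i l))
        ((hPb i l).mono (le_principal_iff.2 (Ici_mem_atTop 0)))
  have := ((hS.sub (hU i)).const_mul (kc a)⁻¹)
  rw [sub_zero, mul_zero] at this
  refine this.congr fun t => ?_
  simp only [speedError]
  field_simp
  ring

end ClosedLoop

theorem motion_coordination_on_surfaces_general
    (n N : ℕ)
    (f : Fin N → Fin n → ℝ → ℝ → ℝ)
    (hf : ∀ i j, ContDiff ℝ 2 (fun p : ℝ × ℝ => f i j p.1 p.2))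
    (hbound : ∀ i j, ∃ C : ℝ, ∀ a b : ℝ,
      |pw1 (f i j) a b| ≤ C ∧ |pw2 (f i j) a b| ≤ C ∧
      |pw1 (pw1 (f i j)) a b| ≤ C ∧ |pw2 (pw1 (f i j)) a b| ≤ C ∧
      |pw1 (pw2 (f i j)) a b| ≤ C ∧ |pw2 (pw2 (f i j)) a b| ≤ C)
    (k : Fin N → Fin n → ℝ) (hk : ∀ i j, 0 < k i j)
    (kc1 kc2 : ℝ) (hkc1 : 0 < kc1) (hkc2 : 0 < kc2)
    (G : SimpleGraph (Fin N)) [DecidableRel G.Adj]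
    (E : ℕ) (D : Matrix (Fin N) (Fin E) ℝ)
    (hD : G.lapMatrix ℝ = D * D.transpose)
    (w1star w2star : Fin N → ℝ)
    -- desired parametric speeds and the corresponding extra-vector constants
    (wd1star wd2star : ℝ) (v1 v2 : ℝ)
    (hv1 : v1 = (-1 : ℝ) ^ (n + 1) * wd2star)
    (hv2 : v2 = (-1 : ℝ) ^ n * wd1star)
    (x : ℝ → Fin N → Fin n → ℝ) (w1 w2 : ℝ → Fin N → ℝ)
    -- the first `n` components of `χ^i`
    (hode_x : ∀ (i : Fin N) (j : Fin n) (t : ℝ), 0 ≤ t →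
      HasDerivAt (fun s => x s i j)
        ((-1 : ℝ) ^ n * (v2 * pw1 (f i j) (w1 t i) (w2 t i)
            - v1 * pw2 (f i j) (w1 t i) (w2 t i))
          - k i j * (x t i j - f i j (w1 t i) (w2 t i))) t)
    -- the `(n+1)`-th component of `χ^i`
    (hode_w1 : ∀ (i : Fin N) (t : ℝ), 0 ≤ t →
      HasDerivAt (fun s => w1 s i)
        ((-1 : ℝ) ^ n * v2
          + (∑ l, k i l * (x t i l - f i l (w1 t i) (w2 t i))
              * pw1 (f i l) (w1 t i) (w2 t i))
          + kc1 * (-(G.lapMatrix ℝ *ᵥ (fun m => w1 t m - w1star m)) i)) t)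
    -- the `(n+2)`-th component of `χ^i`
    (hode_w2 : ∀ (i : Fin N) (t : ℝ), 0 ≤ t →
      HasDerivAt (fun s => w2 s i)
        ((-1 : ℝ) ^ (n + 1) * v1
          + (∑ l, k i l * (x t i l - f i l (w1 t i) (w2 t i))
              * pw2 (f i l) (w1 t i) (w2 t i))
          + kc2 * (-(G.lapMatrix ℝ *ᵥ (fun m => w2 t m - w2star m)) i)) t) :
    -- (1) surface convergence: `‖Φ^i(ξ^i(t))‖ → 0` for every robot `i`
    (∀ i : Fin N,
      Tendsto (fun t => Real.sqrt (∑ j, (x t i j - f i j (w1 t i) (w2 t i)) ^ 2))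
        atTop (nhds 0)) ∧
    -- (2) coordination: `Dᵀ(w₁(t) - w₁*) → 0` and `Dᵀ(w₂(t) - w₂*) → 0`,
    (∀ e : Fin E,
      Tendsto (fun t => (D.transpose *ᵥ (fun m => w1 t m - w1star m)) e)
        atTop (nhds 0)) ∧
    (∀ e : Fin E,
      Tendsto (fun t => (D.transpose *ᵥ (fun m => w2 t m - w2star m)) e)
        atTop (nhds 0)) ∧
    -- so the parametric differences converge for every edge `(i,j)` of `G`
    (∀ i j : Fin N, G.Adj i j →
      Tendsto (fun t => w1 t i - w1 t j) atTop (nhds (w1star i - w1star j))) ∧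
    (∀ i j : Fin N, G.Adj i j →
      Tendsto (fun t => w2 t i - w2 t j) atTop (nhds (w2star i - w2star j))) ∧
    -- (3) surface maneuvering: `ẇ^i_1(t) → ẇ₁*` and `ẇ^i_2(t) → ẇ₂*`
    (∀ i : Fin N,
      Tendsto (fun t =>
        (-1 : ℝ) ^ n * v2
          + (∑ l, k i l * (x t i l - f i l (w1 t i) (w2 t i))
              * pw1 (f i l) (w1 t i) (w2 t i))
          + kc1 * (-(G.lapMatrix ℝ *ᵥ (fun m => w1 t m - w1star m)) i))
        atTop (nhds wd1star)) ∧
    (∀ i : Fin N,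
      Tendsto (fun t =>
        (-1 : ℝ) ^ (n + 1) * v1
          + (∑ l, k i l * (x t i l - f i l (w1 t i) (w2 t i))
              * pw2 (f i l) (w1 t i) (w2 t i))
          + kc2 * (-(G.lapMatrix ℝ *ᵥ (fun m => w2 t m - w2star m)) i))
        atTop (nhds wd2star)) := by
  choose C hC using hbound
  set φ : ℝ → Fin N → Fin n → ℝ := fun t i j => x t i j - f i j (w1 t i) (w2 t i)
  set P : ℝ → Fin 2 → Fin N → Fin n → ℝ := fun t a i j => partialW a (f i j) (w1 t i) (w2 t i)
  set e : ℝ → Fin 2 → Fin N → ℝ :=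
    fun t => ![fun m => w1 t m - w1star m, fun m => w2 t m - w2star m]
  set U := speedError k ![kc1, kc2] (G.lapMatrix ℝ) φ P e
  have hbdd := fun i j =>
    boundedAtFilter_partialW (l := 𝓟 (Ici 0)) (hC i j) (fun t => w1 t i) (fun t => w2 t i)
  have hw1 : ∀ t ≥ 0, ∀ i, HasDerivAt (fun s => w1 s i) ((-1) ^ n * v2 + U t 0 i) t :=
    fun t ht i => (hode_w1 i t ht).congr_deriv (add_assoc _ _ _)
  have hw2 : ∀ t ≥ 0, ∀ i, HasDerivAt (fun s => w2 s i) ((-1) ^ (n + 1) * v1 + U t 1 i) t :=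
    fun t ht i => (hode_w2 i t ht).congr_deriv (add_assoc _ _ _)
  obtain ⟨hφ0, hU0⟩ := tendsto_surface_speedError_zero (kc := ![kc1, kc2]) (φ := φ) (P := P)
    (e := e) (wd := ![(-1) ^ n * v2, (-1) ^ (n + 1) * v1]) hk
    (by simp [Fin.forall_fin_two, hkc1, hkc2]) hD G.lapMatrix_mulVec_const_eq_zero
    (fun t ht i j => (hasDerivAt_surfaceError ((hf i j).differentiable (by norm_num) _)
      (hode_x i j t ht) (hw1 t ht i) (hw2 t ht i)).congr_deriv (by rw [Fin.sum_univ_two]; rfl))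
    (fun t ht a i => by fin_cases a; exacts [(hw1 t ht i).sub_const _, (hw2 t ht i).sub_const _])
    (fun t ht a i j => (hasDerivAt_comp₂ (differentiable_partialW (hf i j) a _) (hw1 t ht i)
      (hw2 t ht i)).congr_deriv (by rw [Fin.sum_univ_two]; rfl))
    (fun a i j => (hbdd i j).1 a) (fun a b i j => (hbdd i j).2 a b)
  have hLe : ∀ a, Tendsto (fun t => G.lapMatrix ℝ *ᵥ e t a) atTop (𝓝 0) := fun a =>
    tendsto_mulVec_zero_of_tendsto_speedError (by fin_cases a <;> simp [hkc1.ne', hkc2.ne']) hφ0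
      (hU0 a) fun i j => (hbdd i j).1 a
  obtain ⟨hD1, hE1⟩ := SimpleGraph.tendsto_consensus hD (hLe 0)
  obtain ⟨hD2, hE2⟩ := SimpleGraph.tendsto_consensus hD (hLe 1)
  have hwd1 : (-1 : ℝ) ^ n * v2 = wd1star := by
    rw [hv2, ← mul_assoc, ← sq, ← pow_mul, Even.neg_one_pow ⟨n, by ring⟩, one_mul]
  have hwd2 : (-1 : ℝ) ^ (n + 1) * v1 = wd2star := by
    rw [hv1, ← mul_assoc, ← sq, ← pow_mul, Even.neg_one_pow ⟨n + 1, by ring⟩, one_mul]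
  refine ⟨fun i => ?_, hD1, hD2, hE1, hE2, fun i => ?_, fun i => ?_⟩
  · simpa using (tendsto_finsetSum Finset.univ fun j _ => (hφ0 i j).pow 2).sqrt
  · rw [← hwd1]
    have := (hU0 0 i).const_add ((-1) ^ n * v2)
    rw [add_zero] at this
    exact this.congr fun t => (add_assoc _ _ _).symm
  · rw [← hwd2]
    have := (hU0 1 i).const_add ((-1) ^ (n + 1) * v1)
    rw [add_zero] at this
    exact this.congr fun t => (add_assoc _ _ _).symm

/-- **Theorem 2 (Motion coordination on surfaces).**
Robot `i` has generalized coordinate `ξ^i = (x^i, w^i_1, w^i_2) ∈ ℝ^{n+2}`,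
surface errors `φ^i_j = x^i_j - f^i_j(w^i_1, w^i_2)`, and follows the coordinating
guiding vector field built from the surface-navigation field with extra vector
constants `v_{n+1} = (-1)^{n+1} ẇ₂*`, `v_{n+2} = (-1)^n ẇ₁*`, and consensus terms
`c₁ = -L(w₁ - w₁*)`, `c₂ = -L(w₂ - w₂*)`.  Under connectivity and boundedness of the
first and second partial derivatives, the surface-convergence errors vanish, the
parametric differences converge to the desired ones, and the parametric speeds
converge to the desired speeds. -/
theorem motion_coordination_on_surfaces
    (n N : ℕ) (hn : 1 ≤ n) (hN : 1 ≤ N)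
    (f : Fin N → Fin n → ℝ → ℝ → ℝ)
    (hf : ∀ i j, ContDiff ℝ 2 (fun p : ℝ × ℝ => f i j p.1 p.2))
    (hbound : ∀ i j, ∃ C : ℝ, ∀ a b : ℝ,
      |pw1 (f i j) a b| ≤ C ∧ |pw2 (f i j) a b| ≤ C ∧
      |pw1 (pw1 (f i j)) a b| ≤ C ∧ |pw2 (pw1 (f i j)) a b| ≤ C ∧
      |pw1 (pw2 (f i j)) a b| ≤ C ∧ |pw2 (pw2 (f i j)) a b| ≤ C)
    (k : Fin N → Fin n → ℝ) (hk : ∀ i j, 0 < k i j)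
    (kc1 kc2 : ℝ) (hkc1 : 0 < kc1) (hkc2 : 0 < kc2)
    (G : SimpleGraph (Fin N)) [DecidableRel G.Adj] (hGconn : G.Connected)
    (E : ℕ) (D : Matrix (Fin N) (Fin E) ℝ)
    (hD : G.lapMatrix ℝ = D * D.transpose)
    (w1star w2star : Fin N → ℝ)
    -- desired parametric speeds and the corresponding extra-vector constants
    (wd1star wd2star : ℝ) (v1 v2 : ℝ)
    (hv1 : v1 = (-1 : ℝ) ^ (n + 1) * wd2star)
    (hv2 : v2 = (-1 : ℝ) ^ n * wd1star)
    (x : ℝ → Fin N → Fin n → ℝ) (w1 w2 : ℝ → Fin N → ℝ)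
    -- the first `n` components of `χ^i`
    (hode_x : ∀ (i : Fin N) (j : Fin n) (t : ℝ), 0 ≤ t →
      HasDerivAt (fun s => x s i j)
        ((-1 : ℝ) ^ n * (v2 * pw1 (f i j) (w1 t i) (w2 t i)
            - v1 * pw2 (f i j) (w1 t i) (w2 t i))
          - k i j * (x t i j - f i j (w1 t i) (w2 t i))) t)
    -- the `(n+1)`-th component of `χ^i`
    (hode_w1 : ∀ (i : Fin N) (t : ℝ), 0 ≤ t →
      HasDerivAt (fun s => w1 s i)
        ((-1 : ℝ) ^ n * v2
          + (∑ l, k i l * (x t i l - f i l (w1 t i) (w2 t i))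
              * pw1 (f i l) (w1 t i) (w2 t i))
          + kc1 * (-(G.lapMatrix ℝ *ᵥ (fun m => w1 t m - w1star m)) i)) t)
    -- the `(n+2)`-th component of `χ^i`
    (hode_w2 : ∀ (i : Fin N) (t : ℝ), 0 ≤ t →
      HasDerivAt (fun s => w2 s i)
        ((-1 : ℝ) ^ (n + 1) * v1
          + (∑ l, k i l * (x t i l - f i l (w1 t i) (w2 t i))
              * pw2 (f i l) (w1 t i) (w2 t i))
          + kc2 * (-(G.lapMatrix ℝ *ᵥ (fun m => w2 t m - w2star m)) i)) t) :
    -- (1) surface convergence: `‖Φ^i(ξ^i(t))‖ → 0` for every robot `i`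
    (∀ i : Fin N,
      Tendsto (fun t => Real.sqrt (∑ j, (x t i j - f i j (w1 t i) (w2 t i)) ^ 2))
        atTop (nhds 0)) ∧
    -- (2) coordination: `Dᵀ(w₁(t) - w₁*) → 0` and `Dᵀ(w₂(t) - w₂*) → 0`,
    (∀ e : Fin E,
      Tendsto (fun t => (D.transpose *ᵥ (fun m => w1 t m - w1star m)) e)
        atTop (nhds 0)) ∧
    (∀ e : Fin E,
      Tendsto (fun t => (D.transpose *ᵥ (fun m => w2 t m - w2star m)) e)
        atTop (nhds 0)) ∧
    -- so the parametric differences converge for every edge `(i,j)` of `G`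
    (∀ i j : Fin N, G.Adj i j →
      Tendsto (fun t => w1 t i - w1 t j) atTop (nhds (w1star i - w1star j))) ∧
    (∀ i j : Fin N, G.Adj i j →
      Tendsto (fun t => w2 t i - w2 t j) atTop (nhds (w2star i - w2star j))) ∧
    -- (3) surface maneuvering: `ẇ^i_1(t) → ẇ₁*` and `ẇ^i_2(t) → ẇ₂*`
    (∀ i : Fin N,
      Tendsto (fun t =>
        (-1 : ℝ) ^ n * v2
          + (∑ l, k i l * (x t i l - f i l (w1 t i) (w2 t i))
              * pw1 (f i l) (w1 t i) (w2 t i))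
          + kc1 * (-(G.lapMatrix ℝ *ᵥ (fun m => w1 t m - w1star m)) i))
        atTop (nhds wd1star)) ∧
    (∀ i : Fin N,
      Tendsto (fun t =>
        (-1 : ℝ) ^ (n + 1) * v1
          + (∑ l, k i l * (x t i l - f i l (w1 t i) (w2 t i))
              * pw2 (f i l) (w1 t i) (w2 t i))
          + kc2 * (-(G.lapMatrix ℝ *ᵥ (fun m => w2 t m - w2star m)) i))
        atTop (nhds wd2star)) :=
  motion_coordination_on_surfaces_general n N f hf hbound k hk kc1 kc2 hkc1 hkc2 G E D hD w1star
    w2star wd1star wd2star v1 v2 hv1 hv2 x w1 w2 hode_x hode_w1 hode_w2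
end

section
/- Corollary 1 (Alignment without the saturation-period condition). In the setting of the saturated heading control law θ̇(t) = Sat_a^b(θ̇_d(t) − k_θ ĥ(t)ᵀEχ̂_p(t)), suppose there exists a constant d with 0 < d < min{−a, b} such that |θ̇_d(t)| ≤ d for all t ≥ 0, and let k̄_θ := min{−a − d, b − d} > 0. If the gain satisfies k_θ ∈ (0, k̄_θ) and σ(0) ≠ π, then the saturation never activates — i.e., a < θ̇_d(t) − k_θ ĥ(t)ᵀEχ̂_p(t) < b for all t ≥ 0 — and the angle difference σ(t) converges to 0 as t → ∞, without requiring any condition on σ during saturation periods. -/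
open Filter Topology Real

/-- saturation function `Sat_a^b(x) = min(max(x,a),b)` -/
noncomputable def sat (a b x : ℝ) : ℝ := min (max x a) b

/-!
Since `|θ̇_d| ≤ d` and `|ĥᵀEχ̂_p| = |sin σ| ≤ 1`, the gain bound keeps the commanded rate
inside `(a, b)`, so the saturation is inactive. The unit vector `χ̂_p` turns at rate `θ̇_d`,
hence `c = cos σ = ĥᵀχ̂_p` obeys `ċ = k_θ sin² σ = k_θ (1 - c²)`. Starting from `c(0) > -1`,
`c` is nondecreasing and cannot stall below `1`, so `cos σ → 1`; as `σ ∈ (-π, π]`, `σ → 0`.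
-/

theorem sat_eq_self {a b x : ℝ} (ha : a ≤ x) (hb : x ≤ b) : sat a b x = x := by
  rw [sat, max_eq_left ha, min_eq_left hb]

theorem sub_mul_mem_Ioo_of_abs_le {a b d k x y : ℝ} (hx : |x| ≤ d) (hy : |y| ≤ 1)
    (hk : 0 ≤ k) (hk' : k < min (-a - d) (b - d)) : a < x - k * y ∧ x - k * y < b := by
  have hky : |k * y| ≤ k := by
    rw [abs_mul, abs_of_nonneg hk]
    exact mul_le_of_le_one_right hk hy
  have hka := hk'.trans_le (min_le_left _ _)
  have hkb := hk'.trans_le (min_le_right _ _)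
  have := abs_le.1 hx
  have := abs_le.1 hky
  constructor <;> linarith

theorem neg_one_lt_cos_of_abs_lt_pi {x : ℝ} (hx : |x| < π) : -1 < cos x := by
  simpa only [cos_pi, cos_abs] using cos_lt_cos_of_nonneg_of_le_pi (abs_nonneg x) le_rfl hx

theorem tendsto_zero_of_tendsto_cos_one {α : Type*} {l : Filter α} {σ : α → ℝ}
    (hσ : ∀ᶠ x in l, |σ x| ≤ π) (h : Tendsto (fun x => cos (σ x)) l (𝓝 1)) :
    Tendsto σ l (𝓝 0) := by
  rw [tendsto_zero_iff_abs_tendsto_zero]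
  have harccos : Tendsto (fun x => arccos (cos (σ x))) l (𝓝 0) := by
    have := (continuous_arccos.tendsto 1).comp h
    rwa [arccos_one] at this
  refine harccos.congr' ?_
  filter_upwards [hσ] with x hx
  rw [Function.comp_apply, ← cos_abs, arccos_cos (abs_nonneg _) hx]

theorem mul_sub_le_sub_of_hasDerivAt_ge {f f' : ℝ → ℝ} {C x y : ℝ}
    (hf : ∀ t, 0 ≤ t → HasDerivAt f (f' t) t) (hC : ∀ t, 0 < t → C ≤ f' t)
    (hx : 0 ≤ x) (hxy : x ≤ y) : C * (y - x) ≤ f y - f x := by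
  refine (convex_Ici 0).mul_sub_le_image_sub_of_le_deriv
    (fun t ht => (hf t ht).continuousAt.continuousWithinAt) ?_ ?_ x hx y (hx.trans hxy) hxy
  · rw [interior_Ici]
    exact fun t ht => (hf t (le_of_lt ht)).differentiableAt.differentiableWithinAt
  · rw [interior_Ici]
    exact fun t ht => (hf t (le_of_lt ht)).deriv ▸ hC t ht

theorem tendsto_one_of_hasDerivAt_mul_one_sub_sq {c : ℝ → ℝ} {k : ℝ} (hk : 0 < k)
    (hc : ∀ t, 0 ≤ t → HasDerivAt c (k * (1 - c t ^ 2)) t)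
    (hbd : ∀ t, 0 ≤ t → |c t| ≤ 1) (h0 : -1 < c 0) : Tendsto c atTop (𝓝 1) := by
  have hmono : ∀ x y, 0 ≤ x → x ≤ y → c x ≤ c y := by
    intro x y hx hxy
    have := mul_sub_le_sub_of_hasDerivAt_ge hc (C := 0) (fun t ht => ?_) hx hxy
    · linarith
    · have := abs_le.1 (hbd t ht.le)
      have : 0 ≤ 1 - c t ^ 2 := by nlinarith
      positivity
  refine tendsto_order.2 ⟨fun a' ha' => ?_, fun b' hb' => ?_⟩
  · -- if `c` stayed below `a' < 1`, then `c' ≥ k (1 - a') (1 + c 0) > 0` would push it past `1`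
    obtain ⟨T, hT, hcT⟩ : ∃ T, 0 ≤ T ∧ a' < c T := by
      by_contra! hle
      set δ := k * ((1 - a') * (1 + c 0))
      have hδ0 : 0 < δ := mul_pos hk (mul_pos (by linarith) (by linarith))
      have hgrow := mul_sub_le_sub_of_hasDerivAt_ge hc (C := δ) (fun t ht => ?_) le_rfl
        (div_pos two_pos hδ0).le
      · rw [sub_zero, mul_div_cancel₀ _ hδ0.ne'] at hgrow
        linarith [(abs_le.1 (hbd (2 / δ) (div_pos two_pos hδ0).le)).2]
      · have h1 : 1 - a' ≤ 1 - c t := by linarith [hle t ht.le]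
        have h2 : 1 + c 0 ≤ 1 + c t := by linarith [hmono 0 t le_rfl ht.le]
        have : (1 - a') * (1 + c 0) ≤ 1 - c t ^ 2 := by
          nlinarith [mul_le_mul h1 h2 (by linarith) (by linarith)]
        exact mul_le_mul_of_nonneg_left this hk.le
    filter_upwards [eventually_ge_atTop T] with t ht
    exact hcT.trans_le (hmono T t hT ht)
  · filter_upwards [eventually_ge_atTop 0] with t ht
    exact (abs_le.1 (hbd t ht)).2.trans_lt hb'

theorem HasDerivAt.div_sqrt_sq_add_sq {f g : ℝ → ℝ} {f' g' t : ℝ} (hf : HasDerivAt f f' t)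
    (hg : HasDerivAt g g' t) (h : 0 < f t ^ 2 + g t ^ 2) :
    HasDerivAt (fun τ => f τ / √(f τ ^ 2 + g τ ^ 2))
      (-((f t * g' - g t * f') / (f t ^ 2 + g t ^ 2)) * (g t / √(f t ^ 2 + g t ^ 2))) t := by
  have hnorm : HasDerivAt (fun τ => √(f τ ^ 2 + g τ ^ 2))
      ((f t * f' + g t * g') / √(f t ^ 2 + g t ^ 2)) t :=
    (((hf.pow 2).add (hg.pow 2)).sqrt h.ne').congr_deriv (by
      simp only [Pi.add_apply, Pi.pow_apply]
      field_simp
      ring)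
  refine (hf.div hnorm (sqrt_pos.2 h).ne').congr_deriv ?_
  field_simp
  rw [sq_sqrt h.le]
  ring

theorem hasDerivAt_cos_mul_add_sin_mul {θ u v : ℝ → ℝ} {θ' ω t : ℝ} (hθ : HasDerivAt θ θ' t)
    (hu : HasDerivAt u (-ω * v t) t) (hv : HasDerivAt v (ω * u t) t) :
    HasDerivAt (fun τ => cos (θ τ) * u τ + sin (θ τ) * v τ)
      ((ω - θ') * (sin (θ t) * u t - cos (θ t) * v t)) t := by
  exact ((hθ.cos.mul hu).add (hθ.sin.mul hv)).congr_deriv (by ring)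

theorem HasDerivAt.div_sqrt_sq_add_sq' {f g : ℝ → ℝ} {f' g' t : ℝ} (hf : HasDerivAt f f' t)
    (hg : HasDerivAt g g' t) (h : 0 < f t ^ 2 + g t ^ 2) :
    HasDerivAt (fun τ => g τ / √(f τ ^ 2 + g τ ^ 2))
      ((f t * g' - g t * f') / (f t ^ 2 + g t ^ 2) * (f t / √(f t ^ 2 + g t ^ 2))) t := by
  have := hg.div_sqrt_sq_add_sq hf (by linarith)
  simp only [add_comm (g _ ^ 2) (f _ ^ 2)] at this
  exact this.congr_deriv (by ring)

theorem heading_alignment_no_saturation_general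
    (χ₁ χ₂ : ℝ → ℝ) (hχ₁ : ContDiff ℝ 1 χ₁) (hχ₂ : ContDiff ℝ 1 χ₂)
    (hnz : ∀ t : ℝ, 0 ≤ t → 0 < χ₁ t ^ 2 + χ₂ t ^ 2)
    (θ σ : ℝ → ℝ)
    (kθ a b : ℝ)
    (nrm s θd : ℝ → ℝ)
    (hnrm : ∀ t, nrm t = Real.sqrt (χ₁ t ^ 2 + χ₂ t ^ 2))
    -- `s(t) = ĥ(t)ᵀ E χ̂_p(t)`
    (hs : ∀ t, s t = (Real.sin (θ t) * χ₁ t - Real.cos (θ t) * χ₂ t) / nrm t)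
    -- `θd(t) = -χ̂_p(t)ᵀ E χ̇_p(t) / ‖χ_p(t)‖`
    (hθd : ∀ t, θd t =
      -((χ₁ t / nrm t) * (-(deriv χ₂ t)) + (χ₂ t / nrm t) * deriv χ₁ t) / nrm t)
    -- `σ` is the signed angle in `(-π, π]` directed from `χ̂_p` to `ĥ`
    (hσ : ∀ t : ℝ, 0 ≤ t → σ t ∈ Set.Ioc (-π) π ∧
      Real.sin (σ t) = s t ∧
      Real.cos (σ t) = (Real.cos (θ t) * χ₁ t + Real.sin (θ t) * χ₂ t) / nrm t)
    -- saturated angular control law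
    (hctrl : ∀ t : ℝ, 0 ≤ t → HasDerivAt θ (sat a b (θd t - kθ * s t)) t)
    -- bound on the change rate of the vector-field orientation
    (d : ℝ)
    (hθdbd : ∀ t : ℝ, 0 ≤ t → |θd t| ≤ d)
    -- gain condition `k_θ ∈ (0, k̄_θ)` with `k̄_θ = min{-a - d, b - d}`
    (hkθ : 0 < kθ) (hkθ' : kθ < min (-a - d) (b - d))
    -- initial angle difference
    (hinit : σ 0 ≠ π) :
    (∀ t : ℝ, 0 ≤ t → a < θd t - kθ * s t ∧ θd t - kθ * s t < b) ∧
    Tendsto σ atTop (nhds 0) := by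
  have hunsat (t : ℝ) (ht : 0 ≤ t) : a < θd t - kθ * s t ∧ θd t - kθ * s t < b :=
    sub_mul_mem_Ioo_of_abs_le (hθdbd t ht) ((hσ t ht).2.1 ▸ abs_sin_le_one _) hkθ.le hkθ'
  refine ⟨hunsat, ?_⟩
  obtain rfl : nrm = fun t => √(χ₁ t ^ 2 + χ₂ t ^ 2) := funext hnrm
  beta_reduce at hs hθd hσ
  set c := fun t => cos (θ t) * (χ₁ t / √(χ₁ t ^ 2 + χ₂ t ^ 2)) +
    sin (θ t) * (χ₂ t / √(χ₁ t ^ 2 + χ₂ t ^ 2))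
  have hcos (t : ℝ) (ht : 0 ≤ t) : cos (σ t) = c t := by rw [(hσ t ht).2.2]; ring
  have hc' (t : ℝ) (ht : 0 ≤ t) : HasDerivAt c (kθ * (1 - c t ^ 2)) t := by
    have hθ : HasDerivAt θ (θd t - kθ * s t) t := by
      simpa only [sat_eq_self (hunsat t ht).1.le (hunsat t ht).2.le] using hctrl t ht
    have hχ₁' := (hχ₁.differentiable one_ne_zero t).hasDerivAt
    have hχ₂' := (hχ₂.differentiable one_ne_zero t).hasDerivAt
    have hω : θd t = (χ₁ t * deriv χ₂ t - χ₂ t * deriv χ₁ t) / (χ₁ t ^ 2 + χ₂ t ^ 2) := by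
      have hn := (sqrt_pos.2 (hnz t ht)).ne'
      have hn' := (hnz t ht).ne'
      rw [hθd t]
      field_simp
      rw [sq_sqrt (hnz t ht).le]
      ring
    refine (hasDerivAt_cos_mul_add_sin_mul hθ (hχ₁'.div_sqrt_sq_add_sq hχ₂' (hnz t ht))
      (hχ₁'.div_sqrt_sq_add_sq' hχ₂' (hnz t ht))).congr_deriv ?_
    rw [← hω, ← hcos t ht, ← sin_sq_add_cos_sq (σ t), (hσ t ht).2.1, hs t]
    ring
  have hσπ (t : ℝ) (ht : 0 ≤ t) : |σ t| ≤ π := abs_le.2 ⟨(hσ t ht).1.1.le, (hσ t ht).1.2⟩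
  have hσ0 : |σ 0| < π := abs_lt.2 ⟨(hσ 0 le_rfl).1.1, (hσ 0 le_rfl).1.2.lt_of_ne hinit⟩
  refine tendsto_zero_of_tendsto_cos_one (eventually_atTop.2 ⟨0, hσπ⟩) ?_
  refine (tendsto_one_of_hasDerivAt_mul_one_sub_sq hkθ hc' (fun t ht => ?_) ?_).congr' ?_
  · exact hcos t ht ▸ abs_cos_le_one _
  · exact hcos 0 le_rfl ▸ neg_one_lt_cos_of_abs_lt_pi hσ0
  · filter_upwards [eventually_ge_atTop 0] with t ht
    exact (hcos t ht).symm

/-- **Corollary 1 (Alignment without the saturation-period condition).**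
In the setting of the saturated heading control law, if `|θd(t)| ≤ d` with
`0 < d < min{-a, b}` and the gain satisfies `k_θ ∈ (0, min{-a - d, b - d})` and
`σ(0) ≠ π`, then saturation never activates, i.e.
`a < θd(t) - k_θ ĥᵀEχ̂_p(t) < b` for all `t ≥ 0`, and `σ(t) → 0`. -/
theorem heading_alignment_no_saturation
    (χ₁ χ₂ : ℝ → ℝ) (hχ₁ : ContDiff ℝ 1 χ₁) (hχ₂ : ContDiff ℝ 1 χ₂)
    (hnz : ∀ t : ℝ, 0 ≤ t → 0 < χ₁ t ^ 2 + χ₂ t ^ 2)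
    (θ σ : ℝ → ℝ)
    (kθ a b : ℝ) (ha : a < 0) (hb : 0 < b)
    (nrm s θd : ℝ → ℝ)
    (hnrm : ∀ t, nrm t = Real.sqrt (χ₁ t ^ 2 + χ₂ t ^ 2))
    -- `s(t) = ĥ(t)ᵀ E χ̂_p(t)`
    (hs : ∀ t, s t = (Real.sin (θ t) * χ₁ t - Real.cos (θ t) * χ₂ t) / nrm t)
    -- `θd(t) = -χ̂_p(t)ᵀ E χ̇_p(t) / ‖χ_p(t)‖`
    (hθd : ∀ t, θd t =
      -((χ₁ t / nrm t) * (-(deriv χ₂ t)) + (χ₂ t / nrm t) * deriv χ₁ t) / nrm t)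
    -- `σ` is the signed angle in `(-π, π]` directed from `χ̂_p` to `ĥ`
    (hσ : ∀ t : ℝ, 0 ≤ t → σ t ∈ Set.Ioc (-π) π ∧
      Real.sin (σ t) = s t ∧
      Real.cos (σ t) = (Real.cos (θ t) * χ₁ t + Real.sin (θ t) * χ₂ t) / nrm t)
    -- saturated angular control law
    (hctrl : ∀ t : ℝ, 0 ≤ t → HasDerivAt θ (sat a b (θd t - kθ * s t)) t)
    -- bound on the change rate of the vector-field orientation
    (d : ℝ) (hd0 : 0 < d) (hd : d < min (-a) b)
    (hθdbd : ∀ t : ℝ, 0 ≤ t → |θd t| ≤ d)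
    -- gain condition `k_θ ∈ (0, k̄_θ)` with `k̄_θ = min{-a - d, b - d}`
    (hkθ : 0 < kθ) (hkθ' : kθ < min (-a - d) (b - d))
    -- initial angle difference
    (hinit : σ 0 ≠ π) :
    (∀ t : ℝ, 0 ≤ t → a < θd t - kθ * s t ∧ θd t - kθ * s t < b) ∧
    Tendsto σ atTop (nhds 0) :=
  heading_alignment_no_saturation_general χ₁ χ₂ hχ₁ hχ₂ hnz θ σ kθ a b nrm s θd hnrm hs hθd hσ hctrl
    d hθdbd hkθ hkθ' hinit
end

section
/- Monotonicity of the composite Lyapunov function along solutions of the path-coordination system. Let ξ : [0,∞) → ℝ^{(n+1)N} be a differentiable function satisfying ξ̇^i(t) = χ^i(ξ^i(t), w(t)) for all i, where w(t) collects the (n+1)-th components. Define V(t) = ½( Φ(ξ(t))ᵀ K Φ(ξ(t)) + k_c (w(t) − w*)ᵀ L (w(t) − w*) ). Then V is differentiable with V̇(t) = −‖K Φ(ξ(t))‖² − ‖𝔉(w(t))ᵀ K Φ(ξ(t)) − k_c L (w(t) − w*)‖² ≤ −‖K Φ(ξ(t))‖² ≤ 0 for all t; in particular V is nonincreasing, and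 Φ(ξ(t)) and Dᵀ(w(t) − w*) remain bounded for all t ≥ 0. -/
open Filter Topology Matrix

/-- stacked path-following error `Φ ∈ ℝ^{nN}`, indexed by robot–coordinate pairs -/
noncomputable def stackPhi (n N : ℕ) (f : Fin N → Fin n → ℝ → ℝ)
    (x : Fin N → Fin n → ℝ) (w : Fin N → ℝ) : Fin N × Fin n → ℝ :=
  fun p => x p.1 p.2 - f p.1 p.2 (w p.1)

/-- block-diagonal gain matrix `K = blockdiag(K^1, …, K^N)` -/
noncomputable def stackK (n N : ℕ) (k : Fin N → Fin n → ℝ) :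
    Matrix (Fin N × Fin n) (Fin N × Fin n) ℝ :=
  Matrix.diagonal fun p => k p.1 p.2

/-- block-diagonal matrix `𝔉(w) = blockdiag(f^1'(w^1), …, f^N'(w^N)) ∈ ℝ^{nN×N}` -/
noncomputable def stackF (n N : ℕ) (f : Fin N → Fin n → ℝ → ℝ) (w : Fin N → ℝ) :
    Matrix (Fin N × Fin n) (Fin N) ℝ :=
  fun p i => if p.1 = i then deriv (f p.1 p.2) (w p.1) else 0

/-!
Along a solution, `Φ̇ = -KΦ - 𝔉 r` and `ẇ = (-1)ⁿ 𝟙 + r` with `r = 𝔉ᵀKΦ - k_c L(w - w*)`.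
As `K` and `L` are symmetric, `V̇ = ⟪Φ̇, KΦ⟫ + k_c ⟪ẇ, L(w - w*)⟫`; the `(-1)ⁿ` term vanishes because
the columns of `L` sum to zero, and the cross terms combine into `V̇ = -‖KΦ‖² - ‖r‖²`.
Monotonicity follows by the mean value theorem, and boundedness from `V(t) ≤ V(0)` together with
`ΦᵀKΦ ≥ k_p Φ_p²` and `(w - w*)ᵀ L (w - w*) = ‖Dᵀ(w - w*)‖²`.
-/

section DotProductCalculus

variable {ι κ : Type*} [Fintype ι] {u v : ℝ → ι → ℝ} {u' v' : ι → ℝ} {t : ℝ}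

theorem hasDerivAt_dotProduct (hu : ∀ i, HasDerivAt (fun s => u s i) (u' i) t)
    (hv : ∀ i, HasDerivAt (fun s => v s i) (v' i) t) :
    HasDerivAt (fun s => u s ⬝ᵥ v s) (u' ⬝ᵥ v t + u t ⬝ᵥ v') t := by
  simpa only [dotProduct, ← Finset.sum_add_distrib] using
    HasDerivAt.fun_sum (u := Finset.univ) fun i _ => (hu i).fun_mul (hv i)

theorem hasDerivAt_mulVec_apply (A : Matrix κ ι ℝ)
    (hu : ∀ i, HasDerivAt (fun s => u s i) (u' i) t) (j : κ) :
    HasDerivAt (fun s => (A *ᵥ u s) j) ((A *ᵥ u') j) t := by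
  simpa only [mulVec, dotProduct] using
    HasDerivAt.fun_sum (u := Finset.univ) fun i _ => (hu i).const_mul (A j i)

theorem hasDerivAt_dotProduct_mulVec_self {A : Matrix ι ι ℝ} (hA : A.IsSymm)
    (hu : ∀ i, HasDerivAt (fun s => u s i) (u' i) t) :
    HasDerivAt (fun s => u s ⬝ᵥ (A *ᵥ u s)) (2 * (u' ⬝ᵥ (A *ᵥ u t))) t := by
  convert hasDerivAt_dotProduct hu (hasDerivAt_mulVec_apply A hu) using 1
  rw [dotProduct_mulVec (u t), ← mulVec_transpose, hA.eq, dotProduct_comm (A *ᵥ u t)]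
  ring

end DotProductCalculus

theorem sum_mulVec_eq_zero_of_isSymm {ι : Type*} [Fintype ι] {A : Matrix ι ι ℝ} (hA : A.IsSymm)
    (hA1 : A *ᵥ 1 = 0) (v : ι → ℝ) : ∑ i, (A *ᵥ v) i = 0 := by
  rw [← one_dotProduct, dotProduct_mulVec, ← mulVec_transpose, hA.eq, hA1, zero_dotProduct]

theorem dotProduct_self_nonneg {ι : Type*} [Fintype ι] (v : ι → ℝ) : 0 ≤ v ⬝ᵥ v :=
  Finset.sum_nonneg fun i _ => mul_self_nonneg (v i)

theorem dotProduct_mul_transpose_mulVec {ι κ : Type*} [Fintype ι] [Fintype κ]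
    (D : Matrix ι κ ℝ) (v : ι → ℝ) : v ⬝ᵥ ((D * Dᵀ) *ᵥ v) = (Dᵀ *ᵥ v) ⬝ᵥ (Dᵀ *ᵥ v) := by
  rw [← mulVec_mulVec, dotProduct_mulVec, ← mulVec_transpose]

theorem abs_le_sqrt_dotProduct_self {ι : Type*} [Fintype ι] (v : ι → ℝ) (i : ι) :
    |v i| ≤ √(v ⬝ᵥ v) :=
  Real.abs_le_sqrt <| (sq (v i)).trans_le <|
    Finset.single_le_sum (fun j _ => mul_self_nonneg (v j)) (Finset.mem_univ i)

theorem abs_le_sqrt_of_dotProduct_diagonal_mulVec_le {ι : Type*} [Fintype ι] [DecidableEq ι]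
    {d v : ι → ℝ} {B : ℝ} (hd : ∀ i, 0 < d i) (h : v ⬝ᵥ (diagonal d *ᵥ v) ≤ B) (i : ι) :
    |v i| ≤ √(B / d i) := by
  refine Real.abs_le_sqrt ((le_div_iff₀ (hd i)).2 (le_trans ?_ h))
  simp only [dotProduct, mulVec_diagonal]
  exact (Finset.single_le_sum (fun j _ => by nlinarith [hd j, mul_self_nonneg (v j)])
    (Finset.mem_univ i)).trans_eq' (by ring)

theorem abs_le_sum_sqrt_of_dotProduct_diagonal_mulVec_le {ι : Type*} [Fintype ι]
    [DecidableEq ι] {d v : ι → ℝ} {B : ℝ} (hd : ∀ i, 0 < d i) (h : v ⬝ᵥ (diagonal d *ᵥ v) ≤ B)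
    (i : ι) : |v i| ≤ ∑ j, √(B / d j) :=
  (abs_le_sqrt_of_dotProduct_diagonal_mulVec_le hd h i).trans <|
    Finset.single_le_sum (f := fun j => √(B / d j)) (fun _ _ => Real.sqrt_nonneg _)
      (Finset.mem_univ i)

theorem dotProduct_diagonal_mulVec_nonneg {ι : Type*} [Fintype ι] [DecidableEq ι]
    {d : ι → ℝ} (hd : ∀ i, 0 ≤ d i) (v : ι → ℝ) : 0 ≤ v ⬝ᵥ (diagonal d *ᵥ v) := by
  simp only [dotProduct, mulVec_diagonal]
  exact Finset.sum_nonneg fun i _ => by nlinarith [hd i, mul_self_nonneg (v i)]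

theorem neg_dotProduct_self_sub_dotProduct_self_le {ι κ : Type*} [Fintype ι] [Fintype κ]
    (a : ι → ℝ) (r : κ → ℝ) : -(a ⬝ᵥ a) - r ⬝ᵥ r ≤ -(a ⬝ᵥ a) ∧ -(a ⬝ᵥ a) ≤ 0 :=
  ⟨sub_le_self _ (dotProduct_self_nonneg r), neg_nonpos.2 (dotProduct_self_nonneg a)⟩

theorem le_two_mul_and_le_two_mul_div_of_half_mul_add_le {A B c V₀ : ℝ} (hA : 0 ≤ A)
    (hB : 0 ≤ B) (hc : 0 < c) (h : 1 / 2 * (A + c * B) ≤ V₀) : A ≤ 2 * V₀ ∧ B ≤ 2 * V₀ / c := by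
  rw [le_div_iff₀ hc]
  constructor <;> nlinarith

theorem antitoneOn_Ici_of_hasDerivAt_nonpos {V V' : ℝ → ℝ} {a : ℝ}
    (hV : ∀ t, a ≤ t → HasDerivAt V (V' t) t) (hV' : ∀ t, a ≤ t → V' t ≤ 0) :
    AntitoneOn V (Set.Ici a) :=
  antitoneOn_of_hasDerivWithinAt_nonpos (convex_Ici a)
    (fun t ht => (hV t ht).continuousAt.continuousWithinAt)
    (fun t ht => (hV t (interior_subset ht)).hasDerivWithinAt)
    (fun t ht => hV' t (interior_subset ht))

theorem lyapunov_derivative_eq {P ι : Type*} [Fintype P] [Fintype ι]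
    (F : Matrix P ι ℝ) (a : P → ℝ) (ℓ r : ι → ℝ) (kc c : ℝ) (hℓ : ∑ i, ℓ i = 0)
    (hr : r = Fᵀ *ᵥ a - kc • ℓ) :
    (-a - F *ᵥ r) ⬝ᵥ a + kc * ((c • 1 + r) ⬝ᵥ ℓ) = -(a ⬝ᵥ a) - r ⬝ᵥ r := by
  have hFr : (F *ᵥ r) ⬝ᵥ a = r ⬝ᵥ (Fᵀ *ᵥ a) := by
    rw [dotProduct_comm, dotProduct_mulVec, ← mulVec_transpose, dotProduct_comm]
  have hrr : r ⬝ᵥ r = r ⬝ᵥ (Fᵀ *ᵥ a) - kc * (r ⬝ᵥ ℓ) := by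
    nth_rewrite 2 [hr]
    rw [dotProduct_sub, dotProduct_smul, smul_eq_mul]
  simp only [sub_dotProduct, neg_dotProduct, add_dotProduct, smul_dotProduct, one_dotProduct, hℓ,
    hFr, hrr, smul_eq_mul]
  ring

theorem hasDerivAt_lyapunov {P ι : Type*} [Fintype P] [Fintype ι] {K : Matrix P P ℝ}
    {L : Matrix ι ι ℝ} (hK : K.IsSymm) (hL : L.IsSymm) (hL1 : L *ᵥ 1 = 0) (F : Matrix P ι ℝ)
    (kc c : ℝ) {φ : ℝ → P → ℝ} {v : ℝ → ι → ℝ} {r : ι → ℝ} {t : ℝ}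
    (hr : r = Fᵀ *ᵥ (K *ᵥ φ t) - kc • (L *ᵥ v t))
    (hφ : ∀ p, HasDerivAt (fun s => φ s p) ((-(K *ᵥ φ t) - F *ᵥ r) p) t)
    (hv : ∀ i, HasDerivAt (fun s => v s i) ((c • 1 + r) i) t) :
    HasDerivAt (fun s => 1 / 2 * (φ s ⬝ᵥ (K *ᵥ φ s) + kc * (v s ⬝ᵥ (L *ᵥ v s))))
      (-((K *ᵥ φ t) ⬝ᵥ (K *ᵥ φ t)) - r ⬝ᵥ r) t := by
  refine (((hasDerivAt_dotProduct_mulVec_self hK hφ).add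
    ((hasDerivAt_dotProduct_mulVec_self hL hv).const_mul kc)).const_mul (1 / 2 : ℝ)).congr_deriv ?_
  rw [← lyapunov_derivative_eq F (K *ᵥ φ t) (L *ᵥ v t) r kc c
    (sum_mulVec_eq_zero_of_isSymm hL hL1 _) hr]
  ring

section Stacked

variable {n N : ℕ}

theorem stackK_mulVec_apply (k : Fin N → Fin n → ℝ) (v : Fin N × Fin n → ℝ)
    (p : Fin N × Fin n) : (stackK n N k *ᵥ v) p = k p.1 p.2 * v p :=
  mulVec_diagonal _ _ _

theorem stackF_mulVec_apply (f : Fin N → Fin n → ℝ → ℝ) (w u : Fin N → ℝ) (p : Fin N × Fin n) :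
    (stackF n N f w *ᵥ u) p = deriv (f p.1 p.2) (w p.1) * u p.1 := by
  simp [stackF, mulVec, dotProduct]

theorem stackF_transpose_mulVec_apply (f : Fin N → Fin n → ℝ → ℝ) (w : Fin N → ℝ)
    (v : Fin N × Fin n → ℝ) (i : Fin N) :
    ((stackF n N f w)ᵀ *ᵥ v) i = ∑ j, v (i, j) * deriv (f i j) (w i) := by
  simp [stackF, mulVec, dotProduct, Fintype.sum_prod_type, mul_comm]

theorem hasDerivAt_stackPhi {f : Fin N → Fin n → ℝ → ℝ} {x : ℝ → Fin N → Fin n → ℝ}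
    {w : ℝ → Fin N → ℝ} {X : Fin N → Fin n → ℝ} {W : Fin N → ℝ} {t : ℝ}
    (hf : ∀ i j, DifferentiableAt ℝ (f i j) (w t i))
    (hx : ∀ i j, HasDerivAt (fun s => x s i j) (X i j) t)
    (hw : ∀ i, HasDerivAt (fun s => w s i) (W i) t) (p : Fin N × Fin n) :
    HasDerivAt (fun s => stackPhi n N f (x s) (w s) p)
      (X p.1 p.2 - (stackF n N f (w t) *ᵥ W) p) t := by
  rw [stackF_mulVec_apply]
  exact (hx p.1 p.2).sub ((hf p.1 p.2).hasDerivAt.comp t (hw p.1))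

theorem hasDerivAt_lyapunov_of_solution {f : Fin N → Fin n → ℝ → ℝ}
    (hf : ∀ i j, Differentiable ℝ (f i j)) {k : Fin N → Fin n → ℝ} {kc : ℝ}
    {G : SimpleGraph (Fin N)} [DecidableRel G.Adj] {wstar : Fin N → ℝ}
    {x : ℝ → Fin N → Fin n → ℝ} {w : ℝ → Fin N → ℝ} {V : ℝ → ℝ} {r : Fin N → ℝ} {t : ℝ}
    (hx : ∀ i j, HasDerivAt (fun s => x s i j)
      ((-1 : ℝ) ^ n * deriv (f i j) (w t i) - k i j * (x t i j - f i j (w t i))) t)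
    (hw : ∀ i, HasDerivAt (fun s => w s i)
      ((-1 : ℝ) ^ n + (∑ l, k i l * (x t i l - f i l (w t i)) * deriv (f i l) (w t i))
        + kc * (-(G.lapMatrix ℝ *ᵥ (fun m => w t m - wstar m)) i)) t)
    (hV : ∀ s, V s = 1 / 2 *
      (stackPhi n N f (x s) (w s) ⬝ᵥ (stackK n N k *ᵥ stackPhi n N f (x s) (w s))
        + kc * ((fun m => w s m - wstar m) ⬝ᵥ (G.lapMatrix ℝ *ᵥ (fun m => w s m - wstar m)))))
    (hr : r = (stackF n N f (w t))ᵀ *ᵥ (stackK n N k *ᵥ stackPhi n N f (x t) (w t))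
      - kc • (G.lapMatrix ℝ *ᵥ (fun m => w t m - wstar m))) :
    HasDerivAt V
      (-((stackK n N k *ᵥ stackPhi n N f (x t) (w t)) ⬝ᵥ
        (stackK n N k *ᵥ stackPhi n N f (x t) (w t))) - r ⬝ᵥ r) t := by
  have hw' : ∀ i, HasDerivAt (fun s => w s i) (((-1 : ℝ) ^ n • 1 + r) i) t := by
    intro i
    convert hw i using 1
    simp only [hr, Pi.add_apply, Pi.sub_apply, Pi.smul_apply, Pi.one_apply, smul_eq_mul,
      stackF_transpose_mulVec_apply, stackK_mulVec_apply, stackPhi]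
    ring
  rw [funext hV]
  refine hasDerivAt_lyapunov (K := stackK n N k) (isSymm_diagonal _) (G.isSymm_lapMatrix (R := ℝ))
    G.lapMatrix_mulVec_const_eq_zero _ kc ((-1 : ℝ) ^ n) hr (fun p => ?_)
    (fun i => (hw' i).sub_const (wstar i))
  convert hasDerivAt_stackPhi (fun i j => (hf i j).differentiableAt) hx hw' p using 1
  simp only [Pi.add_apply, Pi.sub_apply, Pi.neg_apply, Pi.smul_apply, Pi.one_apply, smul_eq_mul,
    stackF_mulVec_apply, stackK_mulVec_apply, stackPhi]
  ring

end Stacked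

theorem lyapunov_monotone_paths_general
    (n N : ℕ)
    (f : Fin N → Fin n → ℝ → ℝ) (hf : ∀ i j, ContDiff ℝ 2 (f i j))
    (k : Fin N → Fin n → ℝ) (hk : ∀ i j, 0 < k i j)
    (kc : ℝ) (hkc : 0 < kc)
    (G : SimpleGraph (Fin N)) [DecidableRel G.Adj]
    (E : ℕ) (D : Matrix (Fin N) (Fin E) ℝ)
    (hD : G.lapMatrix ℝ = D * D.transpose)
    (wstar : Fin N → ℝ)
    (x : ℝ → Fin N → Fin n → ℝ) (w : ℝ → Fin N → ℝ)
    -- the first `n` components of `χ^i`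
    (hode_x : ∀ (i : Fin N) (j : Fin n) (t : ℝ), 0 ≤ t →
      HasDerivAt (fun s => x s i j)
        ((-1 : ℝ) ^ n * deriv (f i j) (w t i)
          - k i j * (x t i j - f i j (w t i))) t)
    -- the `(n+1)`-th component of `χ^i`
    (hode_w : ∀ (i : Fin N) (t : ℝ), 0 ≤ t →
      HasDerivAt (fun s => w s i)
        ((-1 : ℝ) ^ n
          + (∑ l, k i l * (x t i l - f i l (w t i)) * deriv (f i l) (w t i))
          + kc * (-(G.lapMatrix ℝ *ᵥ (fun m => w t m - wstar m)) i)) t)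
    -- the composite Lyapunov function `V`
    (V : ℝ → ℝ)
    (hV : ∀ t, V t = (1 / 2) *
      (stackPhi n N f (x t) (w t) ⬝ᵥ (stackK n N k *ᵥ stackPhi n N f (x t) (w t))
        + kc * ((fun m => w t m - wstar m) ⬝ᵥ
            (G.lapMatrix ℝ *ᵥ (fun m => w t m - wstar m))))) :
    -- `V` is differentiable with
    -- `V̇ = -‖KΦ‖² - ‖𝔉ᵀKΦ - k_c L w̃‖²`
    (∀ t : ℝ, 0 ≤ t →
      HasDerivAt V
        (-((stackK n N k *ᵥ stackPhi n N f (x t) (w t)) ⬝ᵥ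
            (stackK n N k *ᵥ stackPhi n N f (x t) (w t)))
          - (((stackF n N f (w t)).transpose *ᵥ
                (stackK n N k *ᵥ stackPhi n N f (x t) (w t))
              - kc • (G.lapMatrix ℝ *ᵥ (fun m => w t m - wstar m))) ⬝ᵥ
             ((stackF n N f (w t)).transpose *ᵥ
                (stackK n N k *ᵥ stackPhi n N f (x t) (w t))
              - kc • (G.lapMatrix ℝ *ᵥ (fun m => w t m - wstar m))))) t) ∧
    -- and this derivative is `≤ -‖KΦ‖² ≤ 0`
    (∀ t : ℝ, 0 ≤ t →
      (-((stackK n N k *ᵥ stackPhi n N f (x t) (w t)) ⬝ᵥ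
            (stackK n N k *ᵥ stackPhi n N f (x t) (w t)))
          - (((stackF n N f (w t)).transpose *ᵥ
                (stackK n N k *ᵥ stackPhi n N f (x t) (w t))
              - kc • (G.lapMatrix ℝ *ᵥ (fun m => w t m - wstar m))) ⬝ᵥ
             ((stackF n N f (w t)).transpose *ᵥ
                (stackK n N k *ᵥ stackPhi n N f (x t) (w t))
              - kc • (G.lapMatrix ℝ *ᵥ (fun m => w t m - wstar m)))))
        ≤ -((stackK n N k *ᵥ stackPhi n N f (x t) (w t)) ⬝ᵥ
            (stackK n N k *ᵥ stackPhi n N f (x t) (w t))) ∧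
      -((stackK n N k *ᵥ stackPhi n N f (x t) (w t)) ⬝ᵥ
          (stackK n N k *ᵥ stackPhi n N f (x t) (w t))) ≤ 0) ∧
    -- `V` is nonincreasing on `[0, ∞)`
    (∀ s t : ℝ, 0 ≤ s → s ≤ t → V t ≤ V s) ∧
    -- `Φ` and `Dᵀ(w - w*)` remain bounded on `[0, ∞)`
    (∃ C : ℝ,
      (∀ t : ℝ, 0 ≤ t → ∀ p : Fin N × Fin n,
        |stackPhi n N f (x t) (w t) p| ≤ C) ∧
      (∀ t : ℝ, 0 ≤ t → ∀ e : Fin E,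
        |(D.transpose *ᵥ (fun m => w t m - wstar m)) e| ≤ C)) := by
  have hder := fun t (ht : 0 ≤ t) =>
    hasDerivAt_lyapunov_of_solution (fun i j => (hf i j).differentiable (by norm_num))
      (fun i j => hode_x i j t ht) (fun i => hode_w i t ht) hV rfl
  have hineq := fun t (_ : 0 ≤ t) => neg_dotProduct_self_sub_dotProduct_self_le
    (stackK n N k *ᵥ stackPhi n N f (x t) (w t))
    ((stackF n N f (w t))ᵀ *ᵥ (stackK n N k *ᵥ stackPhi n N f (x t) (w t))
      - kc • (G.lapMatrix ℝ *ᵥ (fun m => w t m - wstar m)))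
  have hmono : ∀ s t : ℝ, 0 ≤ s → s ≤ t → V t ≤ V s := fun s t hs hst =>
    antitoneOn_Ici_of_hasDerivAt_nonpos hder (fun t ht => (hineq t ht).1.trans (hineq t ht).2)
      hs (hs.trans hst) hst
  refine ⟨hder, hineq, hmono, ?_⟩
  have hbound : ∀ t, 0 ≤ t →
      stackPhi n N f (x t) (w t) ⬝ᵥ (stackK n N k *ᵥ stackPhi n N f (x t) (w t)) ≤ 2 * V 0 ∧
      (Dᵀ *ᵥ (fun m => w t m - wstar m)) ⬝ᵥ (Dᵀ *ᵥ (fun m => w t m - wstar m)) ≤ 2 * V 0 / kc := by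
    intro t ht
    have hVt := hmono 0 t le_rfl ht
    rw [hV t, hD, dotProduct_mul_transpose_mulVec] at hVt
    exact le_two_mul_and_le_two_mul_div_of_half_mul_add_le
      (dotProduct_diagonal_mulVec_nonneg (ι := Fin N × Fin n) (fun p => (hk p.1 p.2).le) _)
      (dotProduct_self_nonneg _) hkc hVt
  refine ⟨∑ p : Fin N × Fin n, √(2 * V 0 / k p.1 p.2) + √(2 * V 0 / kc),
    fun t ht p => ?_, fun t ht e => ?_⟩
  · exact (abs_le_sum_sqrt_of_dotProduct_diagonal_mulVec_le (ι := Fin N × Fin n)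
      (fun q => hk q.1 q.2) (hbound t ht).1 p).trans (le_add_of_nonneg_right (Real.sqrt_nonneg _))
  · exact ((abs_le_sqrt_dotProduct_self _ e).trans (Real.sqrt_le_sqrt (hbound t ht).2)).trans
      (le_add_of_nonneg_left (Finset.sum_nonneg fun _ _ => Real.sqrt_nonneg _))

/-- **Monotonicity of the composite Lyapunov function along solutions of the
path-coordination system.**  With
`V(t) = ½(Φᵀ K Φ + k_c (w - w*)ᵀ L (w - w*))` along a solution of
`ξ̇^i = χ^i(ξ^i, w)` on `[0, ∞)`:
`V̇(t) = -‖KΦ‖² - ‖𝔉(w)ᵀKΦ - k_c L(w - w*)‖² ≤ -‖KΦ‖² ≤ 0`;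
in particular `V` is nonincreasing and `Φ` and `Dᵀ(w - w*)` remain bounded.
(Squared Euclidean norms are expressed via `⬝ᵥ`.) -/
theorem lyapunov_monotone_paths
    (n N : ℕ) (hn : 1 ≤ n) (hN : 1 ≤ N)
    (f : Fin N → Fin n → ℝ → ℝ) (hf : ∀ i j, ContDiff ℝ 2 (f i j))
    (k : Fin N → Fin n → ℝ) (hk : ∀ i j, 0 < k i j)
    (kc : ℝ) (hkc : 0 < kc)
    (G : SimpleGraph (Fin N)) [DecidableRel G.Adj]
    (E : ℕ) (D : Matrix (Fin N) (Fin E) ℝ)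
    (hD : G.lapMatrix ℝ = D * D.transpose)
    (wstar : Fin N → ℝ)
    (x : ℝ → Fin N → Fin n → ℝ) (w : ℝ → Fin N → ℝ)
    -- the first `n` components of `χ^i`
    (hode_x : ∀ (i : Fin N) (j : Fin n) (t : ℝ), 0 ≤ t →
      HasDerivAt (fun s => x s i j)
        ((-1 : ℝ) ^ n * deriv (f i j) (w t i)
          - k i j * (x t i j - f i j (w t i))) t)
    -- the `(n+1)`-th component of `χ^i`
    (hode_w : ∀ (i : Fin N) (t : ℝ), 0 ≤ t →
      HasDerivAt (fun s => w s i)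
        ((-1 : ℝ) ^ n
          + (∑ l, k i l * (x t i l - f i l (w t i)) * deriv (f i l) (w t i))
          + kc * (-(G.lapMatrix ℝ *ᵥ (fun m => w t m - wstar m)) i)) t)
    -- the composite Lyapunov function `V`
    (V : ℝ → ℝ)
    (hV : ∀ t, V t = (1 / 2) *
      (stackPhi n N f (x t) (w t) ⬝ᵥ (stackK n N k *ᵥ stackPhi n N f (x t) (w t))
        + kc * ((fun m => w t m - wstar m) ⬝ᵥ
            (G.lapMatrix ℝ *ᵥ (fun m => w t m - wstar m))))) :
    -- `V` is differentiable with
    -- `V̇ = -‖KΦ‖² - ‖𝔉ᵀKΦ - k_c L w̃‖²`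
    (∀ t : ℝ, 0 ≤ t →
      HasDerivAt V
        (-((stackK n N k *ᵥ stackPhi n N f (x t) (w t)) ⬝ᵥ
            (stackK n N k *ᵥ stackPhi n N f (x t) (w t)))
          - (((stackF n N f (w t)).transpose *ᵥ
                (stackK n N k *ᵥ stackPhi n N f (x t) (w t))
              - kc • (G.lapMatrix ℝ *ᵥ (fun m => w t m - wstar m))) ⬝ᵥ
             ((stackF n N f (w t)).transpose *ᵥ
                (stackK n N k *ᵥ stackPhi n N f (x t) (w t))
              - kc • (G.lapMatrix ℝ *ᵥ (fun m => w t m - wstar m))))) t) ∧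
    -- and this derivative is `≤ -‖KΦ‖² ≤ 0`
    (∀ t : ℝ, 0 ≤ t →
      (-((stackK n N k *ᵥ stackPhi n N f (x t) (w t)) ⬝ᵥ
            (stackK n N k *ᵥ stackPhi n N f (x t) (w t)))
          - (((stackF n N f (w t)).transpose *ᵥ
                (stackK n N k *ᵥ stackPhi n N f (x t) (w t))
              - kc • (G.lapMatrix ℝ *ᵥ (fun m => w t m - wstar m))) ⬝ᵥ
             ((stackF n N f (w t)).transpose *ᵥ
                (stackK n N k *ᵥ stackPhi n N f (x t) (w t))
              - kc • (G.lapMatrix ℝ *ᵥ (fun m => w t m - wstar m)))))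
        ≤ -((stackK n N k *ᵥ stackPhi n N f (x t) (w t)) ⬝ᵥ
            (stackK n N k *ᵥ stackPhi n N f (x t) (w t))) ∧
      -((stackK n N k *ᵥ stackPhi n N f (x t) (w t)) ⬝ᵥ
          (stackK n N k *ᵥ stackPhi n N f (x t) (w t))) ≤ 0) ∧
    -- `V` is nonincreasing on `[0, ∞)`
    (∀ s t : ℝ, 0 ≤ s → s ≤ t → V t ≤ V s) ∧
    -- `Φ` and `Dᵀ(w - w*)` remain bounded on `[0, ∞)`
    (∃ C : ℝ,
      (∀ t : ℝ, 0 ≤ t → ∀ p : Fin N × Fin n,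
        |stackPhi n N f (x t) (w t) p| ≤ C) ∧
      (∀ t : ℝ, 0 ≤ t → ∀ e : Fin E,
        |(D.transpose *ᵥ (fun m => w t m - wstar m)) e| ≤ C)) :=
  lyapunov_monotone_paths_general n N f hf k hk kc hkc G E D hD wstar x w hode_x hode_w V hV
end
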